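/- arXiv:math/9204213 — 6 statements merged into one kernel-verified Lean document; each statement's English description precedes it below -/
import Mathlib

section
/- For 1 < p < ∞ the Mazur map M_p : S(ℓ_1) → S(ℓ_p), defined coordinatewise by M_p(h)_i = sign(h_i)·|h_i|^{1/p}, is a bijection whose inverse is given coordinatewise by x ↦ (sign(x_i)·|x_i|^p)_{i∈ℕ}, and both M_p and its inverse are uniformly continuous; that is, M_p is a uniform homeomorphism between the unit spheres of ℓ_1 and ℓ_p. -/
/-! The scalar map `t ↦ sign t · |t| ^ θ` sends `|t|` to `|t| ^ θ`, so for `θ = p / q` the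
coordinatewise map `M` sends the unit sphere of `ℓ^p` onto that of `ℓ^q`, and `θ = q / p` inverts
it. For `θ ≤ 1` the scalar map is `θ`-Hölder with constant `2`, and summing `q`-th powers gives
`‖M x - M y‖_q ≤ 2 ‖x - y‖_p ^ (p / q)`. In the direction `ℓ^p → ℓ¹` the mean value bound
`|M a - M b| ≤ p (|a| ^ (p - 1) + |b| ^ (p - 1)) |a - b|` and Hölder's inequality for the exponents
`p / (p - 1)` and `p` give `‖M x - M y‖_1 ≤ 2 p ‖x - y‖_p` on the unit sphere. -/

open scoped ENNReal NNReal

noncomputable section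

lemma abs_sub_eq_abs_add_abs_of_mul_nonpos {a b : ℝ} (hab : a * b ≤ 0) :
    |a - b| = |a| + |b| := by
  rcases mul_nonpos_iff.1 hab with ⟨ha, hb⟩ | ⟨ha, hb⟩
  · rw [abs_of_nonneg (by linarith), abs_of_nonneg ha, abs_of_nonpos hb, sub_eq_add_neg]
  · rw [abs_of_nonpos (by linarith), abs_of_nonpos ha, abs_of_nonneg hb, neg_sub, sub_eq_neg_add]

section rpow

variable {θ p x y : ℝ}

lemma abs_rpow_sub_rpow_le (hθ0 : 0 ≤ θ) (hθ1 : θ ≤ 1) (hx : 0 ≤ x) (hy : 0 ≤ y) :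
    |x ^ θ - y ^ θ| ≤ |x - y| ^ θ := by
  wlog hyx : y ≤ x generalizing x y
  · rw [abs_sub_comm, abs_sub_comm x]; exact this hy hx (le_of_not_ge hyx)
  have h := Real.rpow_add_le_add_rpow (sub_nonneg.2 hyx) hy hθ0 hθ1
  rw [sub_add_cancel] at h
  rw [abs_of_nonneg (sub_nonneg.2 (Real.rpow_le_rpow hy hyx hθ0)), abs_of_nonneg (sub_nonneg.2 hyx)]
  linarith

lemma rpow_sub_rpow_le_of_le (hp : 1 ≤ p) (hy : 0 ≤ y) (hyx : y ≤ x) :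
    x ^ p - y ^ p ≤ p * x ^ (p - 1) * (x - y) := by
  rcases (hy.trans hyx).eq_or_lt with hx0 | hx
  · obtain rfl : y = 0 := le_antisymm (hx0 ▸ hyx) hy
    simp [← hx0, Real.zero_rpow (by linarith : p ≠ 0)]
  have bernoulli := one_add_mul_self_le_rpow_one_add (s := y / x - 1) (by
    linarith [div_nonneg hy hx.le]) hp
  rw [add_sub_cancel, Real.div_rpow hy hx.le, le_div_iff₀ (Real.rpow_pos_of_pos hx p)] at bernoulli
  have expand : (1 + p * (y / x - 1)) * x ^ p = x ^ p - p * (x ^ p / x) * (x - y) := by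
    field_simp; ring
  rw [Real.rpow_sub_one hx.ne']
  linarith

lemma abs_rpow_sub_rpow_le_mul (hp : 1 ≤ p) (hx : 0 ≤ x) (hy : 0 ≤ y) :
    |x ^ p - y ^ p| ≤ p * (x ^ (p - 1) + y ^ (p - 1)) * |x - y| := by
  wlog hyx : y ≤ x generalizing x y
  · rw [abs_sub_comm, abs_sub_comm x, add_comm]; exact this hy hx (le_of_not_ge hyx)
  have hxp : 0 ≤ x ^ p - y ^ p := sub_nonneg.2 (Real.rpow_le_rpow hy hyx (by linarith))
  rw [abs_of_nonneg hxp, abs_of_nonneg (sub_nonneg.2 hyx)]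
  have : 0 ≤ p * y ^ (p - 1) * (x - y) := by
    have := sub_nonneg.2 hyx; positivity
  linarith [rpow_sub_rpow_le_of_le hp hy hyx]

end rpow

def signedRpow (θ a : ℝ) : ℝ := Real.sign a * |a| ^ θ

section signedRpow

variable {θ a b : ℝ}

lemma signedRpow_of_nonneg (hθ : θ ≠ 0) (ha : 0 ≤ a) : signedRpow θ a = |a| ^ θ := by
  rcases ha.eq_or_lt with rfl | ha
  · simp [signedRpow, Real.zero_rpow hθ]
  · rw [signedRpow, Real.sign_of_pos ha, one_mul]

lemma signedRpow_of_nonpos (hθ : θ ≠ 0) (ha : a ≤ 0) : signedRpow θ a = -|a| ^ θ := by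
  rcases ha.eq_or_lt with rfl | ha
  · simp [signedRpow, Real.zero_rpow hθ]
  · rw [signedRpow, Real.sign_of_neg ha, neg_one_mul]

lemma signedRpow_one (a : ℝ) : signedRpow 1 a = a := by
  rcases le_total 0 a with ha | ha
  · rw [signedRpow_of_nonneg one_ne_zero ha, Real.rpow_one, abs_of_nonneg ha]
  · rw [signedRpow_of_nonpos one_ne_zero ha, Real.rpow_one, abs_of_nonpos ha, neg_neg]

lemma abs_signedRpow (hθ : θ ≠ 0) (a : ℝ) : |signedRpow θ a| = |a| ^ θ := by
  rcases le_total 0 a with ha | ha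
  · rw [signedRpow_of_nonneg hθ ha, abs_of_nonneg (by positivity)]
  · rw [signedRpow_of_nonpos hθ ha, abs_neg, abs_of_nonneg (by positivity)]

lemma abs_signedRpow_rpow (hθ : θ ≠ 0) (a r : ℝ) : |signedRpow θ a| ^ r = |a| ^ (θ * r) := by
  rw [abs_signedRpow hθ, ← Real.rpow_mul (abs_nonneg a)]

lemma sign_signedRpow (θ a : ℝ) : Real.sign (signedRpow θ a) = Real.sign a := by
  rcases lt_trichotomy a 0 with ha | rfl | ha
  · have : 0 < |a| ^ θ := Real.rpow_pos_of_pos (abs_pos.2 ha.ne) θ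
    rw [signedRpow, Real.sign_of_neg ha, Real.sign_of_neg (by linarith)]
  · simp [signedRpow]
  · have : 0 < |a| ^ θ := Real.rpow_pos_of_pos (abs_pos.2 ha.ne') θ
    rw [signedRpow, Real.sign_of_pos ha, Real.sign_of_pos (by linarith)]

lemma signedRpow_signedRpow {θ₁ θ₂ : ℝ} (h : θ₁ * θ₂ = 1) (a : ℝ) :
    signedRpow θ₂ (signedRpow θ₁ a) = a := by
  rw [signedRpow, sign_signedRpow, abs_signedRpow (left_ne_zero_of_mul_eq_one h),
    ← Real.rpow_mul (abs_nonneg a), h, ← signedRpow, signedRpow_one]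

lemma abs_signedRpow_sub_of_mul_nonneg (hθ : θ ≠ 0) (hab : 0 ≤ a * b) :
    |signedRpow θ a - signedRpow θ b| = |(|a| ^ θ - |b| ^ θ)| := by
  rcases mul_nonneg_iff.1 hab with ⟨ha, hb⟩ | ⟨ha, hb⟩
  · rw [signedRpow_of_nonneg hθ ha, signedRpow_of_nonneg hθ hb]
  · rw [signedRpow_of_nonpos hθ ha, signedRpow_of_nonpos hθ hb, neg_sub_neg, abs_sub_comm]

lemma abs_signedRpow_sub_of_mul_nonpos (hθ : θ ≠ 0) (hab : a * b ≤ 0) :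
    |signedRpow θ a - signedRpow θ b| = |a| ^ θ + |b| ^ θ := by
  rcases mul_nonpos_iff.1 hab with ⟨ha, hb⟩ | ⟨ha, hb⟩
  · rw [signedRpow_of_nonneg hθ ha, signedRpow_of_nonpos hθ hb, sub_neg_eq_add,
      abs_of_nonneg (by positivity)]
  · rw [signedRpow_of_nonpos hθ ha, signedRpow_of_nonneg hθ hb, ← neg_add', abs_neg,
      abs_of_nonneg (by positivity)]

variable {p : ℝ}

lemma abs_signedRpow_sub_le (hθ0 : 0 < θ) (hθ1 : θ ≤ 1) (a b : ℝ) :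
    |signedRpow θ a - signedRpow θ b| ≤ 2 * |a - b| ^ θ := by
  rcases le_total 0 (a * b) with hab | hab
  · rw [abs_signedRpow_sub_of_mul_nonneg hθ0.ne' hab]
    calc |(|a| ^ θ - |b| ^ θ)| ≤ |(|a| - |b|)| ^ θ :=
          abs_rpow_sub_rpow_le hθ0.le hθ1 (abs_nonneg a) (abs_nonneg b)
      _ ≤ |a - b| ^ θ := Real.rpow_le_rpow (abs_nonneg _) (abs_abs_sub_abs_le_abs_sub a b) hθ0.le
      _ ≤ 2 * |a - b| ^ θ := le_mul_of_one_le_left (by positivity) one_le_two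
  · rw [abs_signedRpow_sub_of_mul_nonpos hθ0.ne' hab, abs_sub_eq_abs_add_abs_of_mul_nonpos hab]
    have ha := Real.rpow_le_rpow (abs_nonneg a) (le_add_of_nonneg_right (abs_nonneg b)) hθ0.le
    have hb := Real.rpow_le_rpow (abs_nonneg b) (le_add_of_nonneg_left (abs_nonneg a)) hθ0.le
    linarith

lemma abs_signedRpow_sub_le_mul (hp : 1 ≤ p) (a b : ℝ) :
    |signedRpow p a - signedRpow p b| ≤ p * (|a| ^ (p - 1) + |b| ^ (p - 1)) * |a - b| := by
  have hp0 : p ≠ 0 := by positivity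
  have hC : 0 ≤ p * (|a| ^ (p - 1) + |b| ^ (p - 1)) := by positivity
  rcases le_total 0 (a * b) with hab | hab
  · rw [abs_signedRpow_sub_of_mul_nonneg hp0 hab]
    exact (abs_rpow_sub_rpow_le_mul hp (abs_nonneg a) (abs_nonneg b)).trans
      (mul_le_mul_of_nonneg_left (abs_abs_sub_abs_le_abs_sub a b) hC)
  · rw [abs_signedRpow_sub_of_mul_nonpos hp0 hab, abs_sub_eq_abs_add_abs_of_mul_nonpos hab]
    calc |a| ^ p + |b| ^ p ≤ (|a| ^ (p - 1) + |b| ^ (p - 1)) * (|a| + |b|) := by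
          have split : ∀ t : ℝ, 0 ≤ t → t ^ p = t ^ (p - 1) * t := fun t ht => by
            rw [← Real.rpow_add_one' ht (by simpa using hp0), sub_add_cancel]
          rw [split _ (abs_nonneg a), split _ (abs_nonneg b)]
          nlinarith [mul_nonneg (Real.rpow_nonneg (abs_nonneg a) (p - 1)) (abs_nonneg b),
            mul_nonneg (Real.rpow_nonneg (abs_nonneg b) (p - 1)) (abs_nonneg a)]
      _ ≤ p * (|a| ^ (p - 1) + |b| ^ (p - 1)) * (|a| + |b|) := by
          gcongr; exact le_mul_of_one_le_left (by positivity) hp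

end signedRpow

namespace lp

variable {ι : Type*} {p q : ℝ≥0∞}

theorem summable_and_tsum_abs_rpow_mul_le (hp : 1 < p.toReal) (x y : lp (fun _ : ι => ℝ) p) :
    (Summable fun i => |x i| ^ (p.toReal - 1) * |y i|) ∧
      ∑' i, |x i| ^ (p.toReal - 1) * |y i| ≤ ‖x‖ ^ (p.toReal - 1) * ‖y‖ := by
  set r := p.toReal
  have hr0 : 0 < r := zero_lt_one.trans hp
  have hr1 : r - 1 ≠ 0 := (sub_pos.2 hp).ne'
  have hconj : (r / (r - 1)).HolderConjugate r := (Real.HolderConjugate.conjExponent hp).symm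
  have hpow : ∀ t : ℝ, 0 ≤ t → (t ^ (r - 1)) ^ (r / (r - 1)) = t ^ r := fun t ht => by
    rw [← Real.rpow_mul ht, mul_div_cancel₀ r hr1]
  have hnorm : ∀ z : lp (fun _ : ι => ℝ) p, ∑' i, |z i| ^ r = ‖z‖ ^ r := fun z =>
    (norm_rpow_eq_tsum hr0 z).symm
  have hsum : ∀ z : lp (fun _ : ι => ℝ) p, Summable fun i => |z i| ^ r := fun z =>
    (lp.memℓp z).summable hr0
  obtain ⟨hs, hle⟩ := Real.summable_and_inner_le_Lp_mul_Lq_tsum_of_nonneg hconj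
    (fun i => Real.rpow_nonneg (abs_nonneg (x i)) _) (fun i => abs_nonneg (y i))
    ((hsum x).congr fun i => (hpow _ (abs_nonneg _)).symm) (hsum y)
  refine ⟨hs, hle.trans_eq ?_⟩
  simp only [hpow _ (abs_nonneg _), hnorm]
  rw [← Real.rpow_mul (norm_nonneg' x), ← Real.rpow_mul (norm_nonneg' y),
    mul_one_div_cancel hr0.ne', Real.rpow_one]
  congr 1
  field_simp

theorem _root_.Memℓp.signedRpow (hp : 0 < p.toReal) (hq : 0 < q.toReal) {x : ι → ℝ}
    (hx : Memℓp x p) : Memℓp (fun i => signedRpow (p.toReal / q.toReal) (x i)) q := by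
  refine memℓp_gen ((hx.summable hp).congr fun i => ?_)
  rw [Real.norm_eq_abs, Real.norm_eq_abs, abs_signedRpow_rpow (div_pos hp hq).ne',
    div_mul_cancel₀ _ hq.ne']

def mazurMap (hp : 0 < p.toReal) (hq : 0 < q.toReal) (x : lp (fun _ : ι => ℝ) p) :
    lp (fun _ : ι => ℝ) q :=
  ⟨fun i => signedRpow (p.toReal / q.toReal) (x i), (lp.memℓp x).signedRpow hp hq⟩

variable {hp : 0 < p.toReal} {hq : 0 < q.toReal}

@[simp]
theorem mazurMap_apply (x : lp (fun _ : ι => ℝ) p) (i : ι) :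
    mazurMap hp hq x i = signedRpow (p.toReal / q.toReal) (x i) :=
  rfl

theorem norm_mazurMap (x : lp (fun _ : ι => ℝ) p) :
    ‖mazurMap hp hq x‖ = ‖x‖ ^ (p.toReal / q.toReal) := by
  refine (Real.rpow_left_inj (norm_nonneg' _) (by positivity [norm_nonneg' x]) hq.ne').1 ?_
  rw [← Real.rpow_mul (norm_nonneg' x), div_mul_cancel₀ _ hq.ne', norm_rpow_eq_tsum hq,
    norm_rpow_eq_tsum hp]
  congr 1 with i
  rw [mazurMap_apply, Real.norm_eq_abs, Real.norm_eq_abs, abs_signedRpow_rpow (div_pos hp hq).ne',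
    div_mul_cancel₀ _ hq.ne']

theorem mazurMap_mazurMap (x : lp (fun _ : ι => ℝ) p) : mazurMap hq hp (mazurMap hp hq x) = x :=
  lp.ext <| funext fun i => signedRpow_signedRpow (by field_simp) (x i)

theorem norm_mazurMap_sub_le (hpq : p ≤ q) (x y : lp (fun _ : ι => ℝ) p) :
    ‖mazurMap hp hq x - mazurMap hp hq y‖ ≤ 2 * ‖x - y‖ ^ (p.toReal / q.toReal) := by
  set θ := p.toReal / q.toReal
  have hθ0 : 0 < θ := div_pos hp hq
  have hθ1 : θ ≤ 1 :=
    div_le_one_of_le₀ (ENNReal.toReal_mono (ENNReal.toReal_pos_iff.1 hq).2.ne hpq) hq.le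
  have hθq : θ * q.toReal = p.toReal := div_mul_cancel₀ _ hq.ne'
  have hpow : ∀ t : ℝ, 0 ≤ t → (2 * t ^ θ) ^ q.toReal = 2 ^ q.toReal * t ^ p.toReal :=
    fun t ht => by rw [Real.mul_rpow zero_le_two (by positivity), ← Real.rpow_mul ht, hθq]
  refine (Real.rpow_le_rpow_iff (norm_nonneg' _) (by positivity [norm_nonneg' (x - y)]) hq).1 ?_
  rw [hpow _ (norm_nonneg' _), norm_rpow_eq_tsum hq, norm_rpow_eq_tsum hp, ← tsum_mul_left]
  refine ((lp.memℓp _).summable hq).tsum_le_tsum (fun i => ?_)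
    (((lp.memℓp (x - y)).summable hp).mul_left _)
  simp only [coeFn_sub, Pi.sub_apply, mazurMap_apply, Real.norm_eq_abs]
  rw [← hpow _ (abs_nonneg _)]
  exact Real.rpow_le_rpow (abs_nonneg _) (abs_signedRpow_sub_le hθ0 hθ1 _ _) hq.le

theorem norm_mazurMap_sub_le_mul (hp1 : 1 < p.toReal) (x y : lp (fun _ : ι => ℝ) p) :
    ‖mazurMap hp (ENNReal.toReal_pos one_ne_zero ENNReal.one_ne_top) x -
        mazurMap hp (ENNReal.toReal_pos one_ne_zero ENNReal.one_ne_top) y‖ ≤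
      p.toReal * (‖x‖ ^ (p.toReal - 1) + ‖y‖ ^ (p.toReal - 1)) * ‖x - y‖ := by
  have h₁ : 0 < (1 : ℝ≥0∞).toReal := ENNReal.toReal_pos one_ne_zero ENNReal.one_ne_top
  have norm_eq_tsum : ∀ z : lp (fun _ : ι => ℝ) 1, ‖z‖ = ∑' i, ‖z i‖ := fun z => by
    simpa only [ENNReal.toReal_one, Real.rpow_one] using norm_rpow_eq_tsum h₁ z
  obtain ⟨hsx, hx⟩ := summable_and_tsum_abs_rpow_mul_le hp1 x (x - y)
  obtain ⟨hsy, hy⟩ := summable_and_tsum_abs_rpow_mul_le hp1 y (x - y)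
  set a := fun i => |x i| ^ (p.toReal - 1) * |(x - y) i|
  set b := fun i => |y i| ^ (p.toReal - 1) * |(x - y) i|
  have hab : Summable fun i => p.toReal * a i + p.toReal * b i :=
    (hsx.mul_left _).add (hsy.mul_left _)
  have hpt : ∀ i, ‖(mazurMap hp h₁ x - mazurMap hp h₁ y) i‖ ≤ p.toReal * a i + p.toReal * b i :=
    fun i => by
      simp only [a, b, coeFn_sub, Pi.sub_apply, mazurMap_apply, Real.norm_eq_abs,
        ENNReal.toReal_one, div_one]
      exact (abs_signedRpow_sub_le_mul hp1.le _ _).trans_eq (by ring)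
  calc ‖mazurMap hp h₁ x - mazurMap hp h₁ y‖
      ≤ ∑' i, (p.toReal * a i + p.toReal * b i) := by
        rw [norm_eq_tsum]
        exact (hab.of_nonneg_of_le (fun _ => norm_nonneg _) hpt).tsum_le_tsum hpt hab
    _ = p.toReal * (∑' i, a i + ∑' i, b i) := by
        rw [(hsx.mul_left _).tsum_add (hsy.mul_left _), tsum_mul_left, tsum_mul_left, mul_add]
    _ ≤ p.toReal * (‖x‖ ^ (p.toReal - 1) * ‖x - y‖ + ‖y‖ ^ (p.toReal - 1) * ‖x - y‖) := by
        gcongr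
    _ = p.toReal * (‖x‖ ^ (p.toReal - 1) + ‖y‖ ^ (p.toReal - 1)) * ‖x - y‖ := by ring

section Normed

variable [Fact (1 ≤ p)] [Fact (1 ≤ q)]

theorem mapsTo_mazurMap_sphere :
    Set.MapsTo (mazurMap hp hq) (Metric.sphere (0 : lp (fun _ : ι => ℝ) p) 1)
      (Metric.sphere 0 1) := fun x hx => by
  rw [mem_sphere_zero_iff_norm] at hx ⊢
  rw [norm_mazurMap, hx, Real.one_rpow]

theorem holderWith_mazurMap (hpq : p ≤ q) :
    HolderWith 2 (p.toNNReal / q.toNNReal) (mazurMap (ι := ι) hp hq) := fun x y => by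
  have hθ : ((p.toNNReal / q.toNNReal : ℝ≥0) : ℝ) = p.toReal / q.toReal := NNReal.coe_div _ _
  rw [edist_dist, edist_dist, dist_eq_norm, dist_eq_norm, ENNReal.ofReal_rpow_of_nonneg
    (norm_nonneg _) NNReal.zero_le_coe, hθ, ENNReal.coe_ofNat, ← ENNReal.ofReal_ofNat 2,
    ← ENNReal.ofReal_mul zero_le_two]
  exact ENNReal.ofReal_le_ofReal (norm_mazurMap_sub_le hpq x y)

theorem uniformContinuous_mazurMap (hpq : p ≤ q) : UniformContinuous (mazurMap (ι := ι) hp hq) :=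
  (holderWith_mazurMap hpq).uniformContinuous (div_pos (NNReal.coe_pos.1 hp) (NNReal.coe_pos.1 hq))

theorem lipschitzOnWith_mazurMap_sphere (hp1 : 1 < p.toReal) :
    LipschitzOnWith (2 * p.toNNReal)
      (mazurMap hp (ENNReal.toReal_pos one_ne_zero ENNReal.one_ne_top) (ι := ι))
      (Metric.sphere 0 1) := by
  refine LipschitzOnWith.of_dist_le_mul fun x hx y hy => ?_
  rw [mem_sphere_zero_iff_norm] at hx hy
  rw [dist_eq_norm, dist_eq_norm]
  refine (norm_mazurMap_sub_le_mul hp1 x y).trans_eq ?_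
  rw [hx, hy, Real.one_rpow]
  push_cast
  ring

end Normed

end lp

/-- The Mazur map `h ↦ (sign h_i · |h_i|^{1/p})` is a uniform homeomorphism from `S(ℓ_1)`
onto `S(ℓ_p)`, with inverse `x ↦ (sign x_i · |x_i|^p)`. -/
theorem mazur_map_uniform_homeomorphism (p : ℝ) (hp : 1 < p)
    [Fact (1 ≤ ENNReal.ofReal p)] :
    ∃ (F : Metric.sphere (0 : lp (fun _ : ℕ => ℝ) 1) 1 →
          Metric.sphere (0 : lp (fun _ : ℕ => ℝ) (ENNReal.ofReal p)) 1)
      (G : Metric.sphere (0 : lp (fun _ : ℕ => ℝ) (ENNReal.ofReal p)) 1 →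
          Metric.sphere (0 : lp (fun _ : ℕ => ℝ) 1) 1),
      (∀ h : Metric.sphere (0 : lp (fun _ : ℕ => ℝ) 1) 1, ∀ i : ℕ,
        (F h : lp (fun _ : ℕ => ℝ) (ENNReal.ofReal p)) i =
          Real.sign ((h : lp (fun _ : ℕ => ℝ) 1) i) * |(h : lp (fun _ : ℕ => ℝ) 1) i| ^ (1 / p)) ∧
      (∀ x : Metric.sphere (0 : lp (fun _ : ℕ => ℝ) (ENNReal.ofReal p)) 1, ∀ i : ℕ,
        (G x : lp (fun _ : ℕ => ℝ) 1) i =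
          Real.sign ((x : lp (fun _ : ℕ => ℝ) (ENNReal.ofReal p)) i) *
            |(x : lp (fun _ : ℕ => ℝ) (ENNReal.ofReal p)) i| ^ p) ∧
      Function.LeftInverse G F ∧ Function.RightInverse G F ∧
      UniformContinuous F ∧ UniformContinuous G := by
  have hp_toReal : (ENNReal.ofReal p).toReal = p := ENNReal.toReal_ofReal (by linarith)
  have hp1 : 1 < (ENNReal.ofReal p).toReal := hp_toReal.symm ▸ hp
  have hp0 : 0 < (ENNReal.ofReal p).toReal := zero_lt_one.trans hp1
  have h₁ : 0 < (1 : ℝ≥0∞).toReal := ENNReal.toReal_pos one_ne_zero ENNReal.one_ne_top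
  have hF := lp.mapsTo_mazurMap_sphere (ι := ℕ) (hp := h₁) (hq := hp0)
  have hG := lp.mapsTo_mazurMap_sphere (ι := ℕ) (hp := hp0) (hq := h₁)
  refine ⟨hF.restrict, hG.restrict, fun h i => ?_, fun x i => ?_, fun h => ?_, fun x => ?_, ?_, ?_⟩
  · simp [Set.MapsTo.val_restrict_apply, signedRpow, hp_toReal]
  · simp [Set.MapsTo.val_restrict_apply, signedRpow, hp_toReal]
  · exact Subtype.ext (lp.mazurMap_mazurMap (hp := h₁) (hq := hp0) _)
  · exact Subtype.ext (lp.mazurMap_mazurMap (hp := hp0) (hq := h₁) _)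
  · exact ((lp.uniformContinuous_mazurMap Fact.out).comp uniformContinuous_subtype_val).subtype_mk _
  · exact (uniformContinuousOn_iff_restrict.1
      (lp.lipschitzOnWith_mazurMap_sphere hp1).uniformContinuousOn).subtype_mk _
end
end

section
/- Let 1 < p < ∞ and let h ∈ ℓ_1 be finitely supported with h_i ≥ 0 for all i and Σ h_i = 1. Set x = (h_i^{1/p})_{i∈ℕ}. Then x ∈ S(ℓ_p), and for every y ∈ ℓ_p with ‖y‖_p ≤ 1, y_i ≥ 0 for all i, and y_i > 0 for all i ∈ supp h, one has Σ_{i∈supp h} h_i·log(y_i) ≤ (1/p)·Σ_{i∈supp h} h_i·log(h_i), with equality if and only if y = x. -/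
/-!
Gibbs' inequality `a log (b / a) ≤ b - a`, with equality only at `b = a`, applied to `a = h i` and
`b = y i ^ p` on the support `s` of `h` gives
`p ∑ h log y - ∑ h log h ≤ ∑_{i ∈ s} y i ^ p - 1 ≤ ‖y‖ ^ p - 1 ≤ 0`.
Equality forces `y i ^ p = h i` on `s`; then `∑_{i ∈ s} |y i| ^ p = 1 ≥ ‖y‖ ^ p`, so `y` vanishes
off `s`, i.e. `y = x`.
-/

open scoped ENNReal
open Real

namespace Real

theorem mul_log_div_le_sub {a b : ℝ} (ha : 0 < a) (hb : 0 < b) : a * log (b / a) ≤ b - a := by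
  have := mul_le_mul_of_nonneg_left (log_le_sub_one_of_pos (div_pos hb ha)) ha.le
  rwa [mul_sub, mul_div_cancel₀ _ ha.ne', mul_one] at this

theorem mul_log_div_lt_sub {a b : ℝ} (ha : 0 < a) (hb : 0 < b) (hab : b ≠ a) :
    a * log (b / a) < b - a := by
  have := mul_lt_mul_of_pos_left
    (log_lt_sub_one_of_pos (div_pos hb ha) (by rwa [Ne, div_eq_one_iff_eq ha.ne'])) ha
  rwa [mul_sub, mul_div_cancel₀ _ ha.ne', mul_one] at this

end Real

namespace Finset

section Gibbs

variable {ι : Type*} {s : Finset ι} {a b : ι → ℝ}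

theorem sum_mul_log_div_nonpos (ha : ∀ i ∈ s, 0 < a i) (hb : ∀ i ∈ s, 0 < b i)
    (hab : ∑ i ∈ s, b i ≤ ∑ i ∈ s, a i) : ∑ i ∈ s, a i * log (b i / a i) ≤ 0 := by
  calc ∑ i ∈ s, a i * log (b i / a i)
      ≤ ∑ i ∈ s, (b i - a i) := sum_le_sum fun i hi => mul_log_div_le_sub (ha i hi) (hb i hi)
    _ ≤ 0 := by rw [sum_sub_distrib]; linarith

theorem sum_mul_log_div_eq_zero_iff (ha : ∀ i ∈ s, 0 < a i) (hb : ∀ i ∈ s, 0 < b i)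
    (hab : ∑ i ∈ s, b i ≤ ∑ i ∈ s, a i) :
    ∑ i ∈ s, a i * log (b i / a i) = 0 ↔ ∀ i ∈ s, b i = a i := by
  refine ⟨fun h0 i hi => ?_, fun hba => sum_eq_zero fun i hi => ?_⟩
  · have hterm : ∀ i ∈ s, a i * log (b i / a i) ≤ b i - a i := fun i hi =>
      mul_log_div_le_sub (ha i hi) (hb i hi)
    have hsum : ∑ i ∈ s, a i * log (b i / a i) = ∑ i ∈ s, (b i - a i) := by
      have := sum_le_sum hterm
      rw [sum_sub_distrib] at this ⊢
      linarith
    by_contra hne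
    exact ((sum_eq_sum_iff_of_le hterm).1 hsum i hi).not_lt
      (mul_log_div_lt_sub (ha i hi) (hb i hi) hne)
  · rw [hba i hi, div_self (ha i hi).ne', log_one, mul_zero]

end Gibbs

section Entropy

variable {ι : Type*} {s : Finset ι} {p : ℝ} {h y : ι → ℝ}

theorem sum_mul_log_rpow_div_eq (hh : ∀ i ∈ s, 0 < h i) (hy : ∀ i ∈ s, 0 < y i) :
    ∑ i ∈ s, h i * log (y i ^ p / h i) =
      p * ∑ i ∈ s, h i * log (y i) - ∑ i ∈ s, h i * log (h i) := by
  rw [mul_sum, ← sum_sub_distrib]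
  refine sum_congr rfl fun i hi => ?_
  rw [log_div (rpow_pos_of_pos (hy i hi) p).ne' (hh i hi).ne', log_rpow (hy i hi)]
  ring

theorem sum_mul_log_le_one_div_mul_sum_mul_log (hp : 0 < p) (hh : ∀ i ∈ s, 0 < h i)
    (hy : ∀ i ∈ s, 0 < y i) (hyh : ∑ i ∈ s, y i ^ p ≤ ∑ i ∈ s, h i) :
    ∑ i ∈ s, h i * log (y i) ≤ 1 / p * ∑ i ∈ s, h i * log (h i) := by
  have := sum_mul_log_div_nonpos hh (fun i hi => rpow_pos_of_pos (hy i hi) p) hyh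
  rw [sum_mul_log_rpow_div_eq hh hy] at this
  rw [one_div, le_inv_mul_iff₀ hp]
  linarith

theorem sum_mul_log_eq_one_div_mul_sum_mul_log_iff (hp : 0 < p) (hh : ∀ i ∈ s, 0 < h i)
    (hy : ∀ i ∈ s, 0 < y i) (hyh : ∑ i ∈ s, y i ^ p ≤ ∑ i ∈ s, h i) :
    ∑ i ∈ s, h i * log (y i) = 1 / p * ∑ i ∈ s, h i * log (h i) ↔ ∀ i ∈ s, y i ^ p = h i := by
  rw [← sum_mul_log_div_eq_zero_iff hh (fun i hi => rpow_pos_of_pos (hy i hi) p) hyh,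
    sum_mul_log_rpow_div_eq hh hy, sub_eq_zero, one_div, eq_inv_mul_iff_mul_eq₀ hp.ne']

end Entropy

end Finset

theorem finsum_mul_eq_sum {ι R : Type*} [NonUnitalNonAssocSemiring R] {f g : ι → R}
    (hf : (Function.support f).Finite) : ∑ᶠ i, f i * g i = ∑ i ∈ hf.toFinset, f i * g i :=
  finsum_eq_sum_of_support_subset _ <| by simpa using Function.support_mul_subset_left f g

theorem memℓp_rpow_one_div {ι : Type*} {p : ℝ} {h : ι → ℝ} (hp : 0 < p) (hh : ∀ i, 0 ≤ h i)
    (hs : Summable h) : Memℓp (fun i => h i ^ (1 / p)) (ENNReal.ofReal p) :=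
  memℓp_gen <| by
    simpa only [ENNReal.toReal_ofReal hp.le, norm_of_nonneg (rpow_nonneg (hh _) _), one_div,
      rpow_inv_rpow (hh _) hp.ne'] using hs

namespace lp

theorem apply_eq_zero_of_norm_rpow_le_sum {α : Type*} {E : α → Type*}
    [∀ i, NormedAddCommGroup (E i)] {p : ℝ≥0∞} (hp : 0 < p.toReal) (f : lp E p) {s : Finset α}
    (hs : ‖f‖ ^ p.toReal ≤ ∑ i ∈ s, ‖f i‖ ^ p.toReal) {i : α} (hi : i ∉ s) : f i = 0 := by
  classical
  have := sum_rpow_le_norm_rpow hp f (insert i s)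
  rw [Finset.sum_insert hi] at this
  have : ‖f i‖ ^ p.toReal = 0 := le_antisymm (by linarith) (by positivity)
  rwa [Real.rpow_eq_zero (norm_nonneg _) hp.ne', norm_eq_zero] at this

variable {ι : Type*} {p : ℝ} {h : ι → ℝ}

theorem norm_eq_tsum_rpow_one_div (hp : 0 < p) (hh : ∀ i, 0 ≤ h i)
    (x : lp (fun _ : ι => ℝ) (ENNReal.ofReal p)) (hx : ∀ i, x i = h i ^ (1 / p)) :
    ‖x‖ = (∑' i, h i) ^ (1 / p) := by
  rw [norm_eq_tsum_rpow (by rwa [ENNReal.toReal_ofReal hp.le]), ENNReal.toReal_ofReal hp.le]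
  simp_rw [hx, norm_of_nonneg (rpow_nonneg (hh _) _), one_div, rpow_inv_rpow (hh _) hp.ne']

theorem sum_rpow_le_norm_rpow_of_nonneg (hp : 0 < p)
    (y : lp (fun _ : ι => ℝ) (ENNReal.ofReal p)) (hy : ∀ i, 0 ≤ y i) (s : Finset ι) :
    ∑ i ∈ s, y i ^ p ≤ ‖y‖ ^ p := by
  simpa only [ENNReal.toReal_ofReal hp.le, norm_of_nonneg (hy _)] using
    sum_rpow_le_norm_rpow (by rwa [ENNReal.toReal_ofReal hp.le]) y s

theorem eq_of_forall_rpow_apply_eq (hp : 0 < p) {x y : lp (fun _ : ι => ℝ) (ENNReal.ofReal p)}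
    {s : Finset ι} (hx : ∀ i, x i = h i ^ (1 / p)) (hy1 : ‖y‖ ≤ 1) (hy0 : ∀ i, 0 ≤ y i)
    (hs : ∑ i ∈ s, h i = 1) (hsupp : ∀ i ∉ s, h i = 0) (hyh : ∀ i ∈ s, y i ^ p = h i) :
    y = x := by
  refine lp.ext (funext fun i => ?_)
  rw [hx]
  by_cases hi : i ∈ s
  · rw [← hyh i hi, one_div, rpow_rpow_inv (hy0 i) hp.ne']
  · have hy1p : ‖y‖ ^ p ≤ ∑ i ∈ s, ‖y i‖ ^ p := by
      rw [Finset.sum_congr rfl fun i hi => (norm_of_nonneg (hy0 i)).symm ▸ hyh i hi, hs]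
      exact rpow_le_one (norm_nonneg' y) hy1 hp.le
    rw [apply_eq_zero_of_norm_rpow_le_sum (by rwa [ENNReal.toReal_ofReal hp.le]) y
      (by rwa [ENNReal.toReal_ofReal hp.le]) hi, hsupp i hi, zero_rpow (one_div_ne_zero hp.ne')]

end lp

theorem entropy_maximizer_lp_general (p : ℝ) (hp : 1 < p)
    (h : ℕ → ℝ) (hfin : {i : ℕ | h i ≠ 0}.Finite) (hpos : ∀ i, 0 ≤ h i)
    (hsum : ∑ᶠ i, h i = 1) :
    ∃ x : lp (fun _ : ℕ => ℝ) (ENNReal.ofReal p),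
      (∀ i, x i = h i ^ (1 / p)) ∧ ‖x‖ = 1 ∧
      ∀ y : lp (fun _ : ℕ => ℝ) (ENNReal.ofReal p),
        ‖y‖ ≤ 1 → (∀ i, 0 ≤ y i) → (∀ i ∈ {i : ℕ | h i ≠ 0}, 0 < y i) →
          (∑ᶠ i, h i * Real.log (y i)) ≤ (1 / p) * ∑ᶠ i, h i * Real.log (h i) ∧
          ((∑ᶠ i, h i * Real.log (y i)) = (1 / p) * (∑ᶠ i, h i * Real.log (h i)) ↔ y = x) := by
  have hp0 : 0 < p := zero_lt_one.trans hp
  set s := hfin.toFinset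
  have hs : ∀ i ∈ s, 0 < h i := fun i hi => (hpos i).lt_of_ne' (hfin.mem_toFinset.1 hi)
  have hsupp : ∀ i ∉ s, h i = 0 := fun i hi => not_not.1 (mt hfin.mem_toFinset.2 hi)
  have hsum_s : ∑ i ∈ s, h i = 1 := hsum ▸ (finsum_eq_sum h hfin).symm
  obtain ⟨x, hx⟩ : ∃ x : lp (fun _ : ℕ => ℝ) (ENNReal.ofReal p), ∀ i, x i = h i ^ (1 / p) :=
    ⟨⟨_, memℓp_rpow_one_div hp0 hpos (summable_of_hasFiniteSupport hfin)⟩, fun _ => rfl⟩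
  refine ⟨x, hx, ?_, fun y hy1 hy0 hys => ?_⟩
  · rw [lp.norm_eq_tsum_rpow_one_div hp0 hpos x hx, tsum_eq_finsum hfin, hsum, one_rpow]
  replace hys : ∀ i ∈ s, 0 < y i := fun i hi => hys i (hfin.mem_toFinset.1 hi)
  have hyh : ∑ i ∈ s, y i ^ p ≤ ∑ i ∈ s, h i := hsum_s ▸
    (lp.sum_rpow_le_norm_rpow_of_nonneg hp0 y hy0 s).trans
      (rpow_le_one (lp.norm_nonneg' y) hy1 hp0.le)
  rw [finsum_mul_eq_sum hfin, finsum_mul_eq_sum hfin]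
  refine ⟨Finset.sum_mul_log_le_one_div_mul_sum_mul_log hp0 hs hys hyh,
    (Finset.sum_mul_log_eq_one_div_mul_sum_mul_log_iff hp0 hs hys hyh).trans
      ⟨lp.eq_of_forall_rpow_apply_eq hp0 hx hy1 hy0 hsum_s hsupp, ?_⟩⟩
  rintro rfl i -
  rw [hx, one_div, rpow_inv_rpow (hpos i) hp0.ne']

/-- For finitely supported nonnegative `h` with `∑ h_i = 1`, the vector `x = (h_i^{1/p})`
lies on `S(ℓ_p)` and is the unique maximizer of the entropy `y ↦ ∑ h_i log y_i` over the
nonnegative part of the unit ball of `ℓ_p`, the maximum value being `(1/p)·∑ h_i log h_i`. -/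
theorem entropy_maximizer_lp (p : ℝ) (hp : 1 < p) [Fact (1 ≤ ENNReal.ofReal p)]
    (h : ℕ → ℝ) (hfin : {i : ℕ | h i ≠ 0}.Finite) (hpos : ∀ i, 0 ≤ h i)
    (hsum : ∑ᶠ i, h i = 1) :
    ∃ x : lp (fun _ : ℕ => ℝ) (ENNReal.ofReal p),
      (∀ i, x i = h i ^ (1 / p)) ∧ ‖x‖ = 1 ∧
      ∀ y : lp (fun _ : ℕ => ℝ) (ENNReal.ofReal p),
        ‖y‖ ≤ 1 → (∀ i, 0 ≤ y i) → (∀ i ∈ {i : ℕ | h i ≠ 0}, 0 < y i) →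
          (∑ᶠ i, h i * Real.log (y i)) ≤ (1 / p) * ∑ᶠ i, h i * Real.log (h i) ∧
          ((∑ᶠ i, h i * Real.log (y i)) = (1 / p) * (∑ᶠ i, h i * Real.log (h i)) ↔ y = x) :=
  entropy_maximizer_lp_general p hp h hfin hpos hsum
end

section
/- There exists a function ψ : (0,1) → (0,∞) with the following property. Let 1 < p < ∞, let ε ∈ (0,1), let h ∈ ℓ_1 be finitely supported with h_i ≥ 0 and Σ h_i = 1, and let v ∈ ℓ_p with ‖v‖_p ≤ 1, v_i ≥ 0 for all i, and v_i > 0 for every i ∈ supp h. If Σ_{i∈supp h} h_i·log(v_i) ≥ (1/p)·Σ_{i∈supp h} h_i·log(h_i) − ψ(ε), then there exists a set A ⊆ supp h such that Σ_{i∈A} h_i > 1 − ε and (1 − ε)·h_i^{1/p} ≤ v_i ≤ (1 + ε)·h_i^{1/p} for every i ∈ A. -/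
/-!
Rescale `v` against the maximizer, `w i = v i / h i ^ (1/p)`, and measure the defect of each
coordinate by `logGap t = t - 1 - log t ≥ 0`. Bernoulli's inequality `t - 1 ≤ (t ^ p - 1) / p`
and `∑ v i ^ p ≤ 1` bound the `h`-average of `logGap ∘ w` by the entropy deficit
`(1/p) ∑ h log h - ∑ h log v`. Markov's inequality then confines `logGap ∘ w` below a fixed
level on a set of large `h`-mass, and since `logGap` decreases on `(0, 1]` and increases on
`[1, ∞)`, a small level forces `w i ∈ [1 - ε, 1 + ε]`.
-/

noncomputable section

open Finset

def logGap (t : ℝ) : ℝ := t - 1 - Real.log t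

lemma logGap_pos {t : ℝ} (ht : 0 < t) (ht1 : t ≠ 1) : 0 < logGap t := by
  have := Real.log_lt_sub_one_of_pos ht ht1
  unfold logGap; linarith

lemma logGap_nonneg {t : ℝ} (ht : 0 < t) : 0 ≤ logGap t := by
  have := Real.log_le_sub_one_of_pos ht
  unfold logGap; linarith

/-- The tangent line of the strictly convex `logGap` at `a` lies strictly below it. -/
lemma logGap_add_mul_lt {a w : ℝ} (ha : 0 < a) (hw : 0 < w) (hne : w ≠ a) :
    logGap a + (w - a) * (1 - a⁻¹) < logGap w := by
  have hlog :=
    Real.log_lt_sub_one_of_pos (div_pos hw ha) (by rwa [ne_eq, div_eq_one_iff_eq ha.ne'])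
  rw [Real.log_div hw.ne' ha.ne'] at hlog
  have : (w - a) * a⁻¹ = w / a - 1 := by field_simp
  unfold logGap
  linarith

def logGapWindow (ε : ℝ) : ℝ := min (logGap (1 - ε)) (logGap (1 + ε))

lemma logGapWindow_pos {ε : ℝ} (hε0 : 0 < ε) (hε1 : ε < 1) : 0 < logGapWindow ε :=
  lt_min (logGap_pos (by linarith) (by linarith)) (logGap_pos (by linarith) (by linarith))

lemma logGap_strictAntiOn : StrictAntiOn logGap (Set.Ioc 0 1) := by
  intro a ha b hb hab
  have hslope : 0 ≤ (a - b) * (1 - b⁻¹) :=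
    mul_nonneg_of_nonpos_of_nonpos (by linarith) (sub_nonpos.2 ((one_le_inv₀ hb.1).2 hb.2))
  linarith [logGap_add_mul_lt hb.1 ha.1 hab.ne]

lemma logGap_strictMonoOn : StrictMonoOn logGap (Set.Ici 1) := by
  intro a (ha : 1 ≤ a) b _ hab
  have hslope : 0 ≤ (b - a) * (1 - a⁻¹) :=
    mul_nonneg (by linarith) (sub_nonneg.2 (inv_le_one_of_one_le₀ ha))
  linarith [logGap_add_mul_lt (by linarith) (by linarith) hab.ne']

lemma mem_Icc_of_logGap_le_logGapWindow {ε w : ℝ} (hε : 0 ≤ ε) (hw : 0 < w)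
    (hle : logGap w ≤ logGapWindow ε) : w ∈ Set.Icc (1 - ε) (1 + ε) := by
  constructor
  · by_contra! hlt
    have := logGap_strictAntiOn ⟨hw, by linarith⟩ ⟨by linarith, by linarith⟩ hlt
    exact (min_le_left _ _ |>.trans_lt this).not_ge hle
  · by_contra! hlt
    have := logGap_strictMonoOn (show 1 ≤ 1 + ε by linarith) (show 1 ≤ w by linarith) hlt
    exact (min_le_right _ _ |>.trans_lt this).not_ge hle

lemma logGap_le_rpow {p t : ℝ} (hp : 1 ≤ p) (ht : 0 < t) :
    logGap t ≤ (t ^ p - 1) / p - Real.log t := by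
  have hbern : 1 + p * (t - 1) ≤ t ^ p := by
    simpa using one_add_mul_self_le_rpow_one_add (s := t - 1) (by linarith) hp
  have : t - 1 ≤ (t ^ p - 1) / p := by
    rw [le_div_iff₀ (by linarith)]; linarith
  unfold logGap
  linarith

lemma mul_logGap_div_rpow_le {p a x : ℝ} (hp : 1 ≤ p) (ha : 0 < a) (hx : 0 < x) :
    a * logGap (x / a ^ (1 / p)) ≤
      x ^ p / p - a / p - a * Real.log x + 1 / p * (a * Real.log a) := by
  have hp0 : 0 < p := by linarith
  have hroot : 0 < a ^ (1 / p) := Real.rpow_pos_of_pos ha _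
  have hpow : (x / a ^ (1 / p)) ^ p = x ^ p / a := by
    rw [Real.div_rpow hx.le hroot.le, ← Real.rpow_mul ha.le, one_div_mul_cancel hp0.ne',
      Real.rpow_one]
  have hlog : Real.log (x / a ^ (1 / p)) = Real.log x - 1 / p * Real.log a := by
    rw [Real.log_div hx.ne' hroot.ne', Real.log_rpow ha]
  calc a * logGap (x / a ^ (1 / p))
      ≤ a * (((x / a ^ (1 / p)) ^ p - 1) / p - Real.log (x / a ^ (1 / p))) :=
        mul_le_mul_of_nonneg_left (logGap_le_rpow hp (div_pos hx hroot)) ha.le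
    _ = x ^ p / p - a / p - a * Real.log x + 1 / p * (a * Real.log a) := by
        rw [hpow, hlog]; field_simp; ring

lemma sum_mul_logGap_div_rpow_le {ι : Type*} {s : Finset ι} {p : ℝ} {h v : ι → ℝ}
    (hp : 1 ≤ p) (hh : ∀ i ∈ s, 0 < h i) (hv : ∀ i ∈ s, 0 < v i)
    (hsum : ∑ i ∈ s, h i = 1) (hvp : ∑ i ∈ s, v i ^ p ≤ 1) :
    ∑ i ∈ s, h i * logGap (v i / h i ^ (1 / p)) ≤
      1 / p * ∑ i ∈ s, h i * Real.log (h i) - ∑ i ∈ s, h i * Real.log (v i) := by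
  have hp0 : 0 < p := by linarith
  calc ∑ i ∈ s, h i * logGap (v i / h i ^ (1 / p))
      ≤ ∑ i ∈ s,
          (v i ^ p / p - h i / p - h i * Real.log (v i) + 1 / p * (h i * Real.log (h i))) :=
        sum_le_sum fun i hi => mul_logGap_div_rpow_le hp (hh i hi) (hv i hi)
    _ = (∑ i ∈ s, v i ^ p) / p - 1 / p - ∑ i ∈ s, h i * Real.log (v i)
          + 1 / p * ∑ i ∈ s, h i * Real.log (h i) := by
        simp only [sum_add_distrib, sum_sub_distrib, ← sum_div, ← mul_sum, hsum]
    _ ≤ 1 / p * ∑ i ∈ s, h i * Real.log (h i) - ∑ i ∈ s, h i * Real.log (v i) := by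
        have : (∑ i ∈ s, v i ^ p) / p ≤ 1 / p := by gcongr
        linarith

lemma mul_sum_filter_lt_le_sum_mul {ι : Type*} {s : Finset ι} {h f : ι → ℝ} (m : ℝ)
    (hh : ∀ i ∈ s, 0 ≤ h i) (hf : ∀ i ∈ s, 0 ≤ f i) :
    m * ∑ i ∈ s with m < f i, h i ≤ ∑ i ∈ s, h i * f i :=
  calc m * ∑ i ∈ s with m < f i, h i
      ≤ ∑ i ∈ s with m < f i, h i * f i := by
        rw [mul_sum]
        refine sum_le_sum fun i hi => ?_
        rw [mem_filter] at hi
        rw [mul_comm]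
        exact mul_le_mul_of_nonneg_left hi.2.le (hh i hi.1)
    _ ≤ ∑ i ∈ s, h i * f i :=
        sum_le_sum_of_subset_of_nonneg (filter_subset _ _)
          fun i hi _ => mul_nonneg (hh i hi) (hf i hi)

lemma sum_sub_le_sum_filter_le {ι : Type*} {s : Finset ι} {h f : ι → ℝ} {m δ : ℝ}
    (hm : 0 < m) (hh : ∀ i ∈ s, 0 ≤ h i) (hf : ∀ i ∈ s, 0 ≤ f i)
    (hδ : ∑ i ∈ s, h i * f i ≤ δ * m) :
    ∑ i ∈ s, h i - δ ≤ ∑ i ∈ s with f i ≤ m, h i := by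
  have hbad : ∑ i ∈ s with m < f i, h i ≤ δ :=
    le_of_mul_le_mul_left (by linarith [mul_sum_filter_lt_le_sum_mul m hh hf]) hm
  have hsplit := sum_filter_add_sum_filter_not s (fun i => f i ≤ m) h
  simp only [not_le] at hsplit
  linarith

lemma sum_rpow_le_one_of_norm_le_one {ι : Type*} {p : ℝ} (hp : 0 < p)
    {v : lp (fun _ : ι => ℝ) (ENNReal.ofReal p)} (hv : ‖v‖ ≤ 1) (hv0 : ∀ i, 0 ≤ v i)
    (s : Finset ι) : ∑ i ∈ s, v i ^ p ≤ 1 := by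
  have := lp.sum_rpow_le_norm_rpow (by rwa [ENNReal.toReal_ofReal hp.le]) v s
  simp only [ENNReal.toReal_ofReal hp.le, Real.norm_of_nonneg (hv0 _)] at this
  exact this.trans (Real.rpow_le_one (lp.norm_nonneg' v) hv hp.le)

/-- There is a function `ψ : (0,1) → (0,∞)` such that any nonnegative `v` in the unit ball
of `ℓ_p` whose entropy against `h` is within `ψ(ε)` of the maximal value
`(1/p)·∑ h_i log h_i` agrees, up to factor `1 ± ε`, with the maximizer `(h_i^{1/p})`
on a subset of `supp h` carrying `h`-mass more than `1 - ε`. -/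
theorem entropy_near_maximizer :
    ∃ ψ : ℝ → ℝ, (∀ ε : ℝ, 0 < ε → ε < 1 → 0 < ψ ε) ∧
      ∀ (p : ℝ), 1 < p → ∀ (_ : Fact (1 ≤ ENNReal.ofReal p)),
        ∀ ε : ℝ, 0 < ε → ε < 1 →
        ∀ h : ℕ → ℝ, {i : ℕ | h i ≠ 0}.Finite → (∀ i, 0 ≤ h i) → (∑ᶠ i, h i = 1) →
        ∀ v : lp (fun _ : ℕ => ℝ) (ENNReal.ofReal p),
          ‖v‖ ≤ 1 → (∀ i, 0 ≤ v i) → (∀ i ∈ {i : ℕ | h i ≠ 0}, 0 < v i) →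
          (1 / p) * (∑ᶠ i, h i * Real.log (h i)) - ψ ε ≤ (∑ᶠ i, h i * Real.log (v i)) →
          ∃ A : Set ℕ, A ⊆ {i : ℕ | h i ≠ 0} ∧ 1 - ε < (∑ᶠ i ∈ A, h i) ∧
            ∀ i ∈ A, (1 - ε) * h i ^ (1 / p) ≤ v i ∧ v i ≤ (1 + ε) * h i ^ (1 / p) := by
  refine ⟨fun ε => ε / 2 * logGapWindow ε,
    fun ε hε0 hε1 => mul_pos (by linarith) (logGapWindow_pos hε0 hε1), ?_⟩
  intro p hp _ ε hε0 hε1 h hfin hh0 hsum v hv1 hv0 hvpos hdeficit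
  set s := hfin.toFinset
  have hmem : ∀ i, i ∈ s ↔ h i ≠ 0 := fun _ => hfin.mem_toFinset
  have hh : ∀ i ∈ s, 0 < h i := fun i hi => (hh0 i).lt_of_ne' ((hmem i).1 hi)
  have hv : ∀ i ∈ s, 0 < v i := fun i hi => hvpos i ((hmem i).1 hi)
  have hsupp : ∀ f : ℕ → ℝ, Function.support (fun i => h i * f i) ⊆ s :=
    fun f i hi => (hmem i).2 (left_ne_zero_of_mul hi)
  rw [finsum_eq_sum_of_support_subset h fun i hi => (hmem i).2 hi] at hsum
  rw [finsum_eq_sum_of_support_subset _ (hsupp _), finsum_eq_sum_of_support_subset _ (hsupp _)]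
    at hdeficit
  set w := fun i => v i / h i ^ (1 / p)
  have hw : ∀ i ∈ s, 0 < w i := fun i hi => div_pos (hv i hi) (Real.rpow_pos_of_pos (hh i hi) _)
  have hgap : ∑ i ∈ s, h i * logGap (w i) ≤ ε / 2 * logGapWindow ε := by
    linarith [sum_mul_logGap_div_rpow_le hp.le hh hv hsum
      (sum_rpow_le_one_of_norm_le_one (by linarith) hv1 hv0 s)]
  have hgood := sum_sub_le_sum_filter_le (logGapWindow_pos hε0 hε1)
    (fun i hi => (hh i hi).le) (fun i hi => logGap_nonneg (hw i hi)) hgap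
  refine ⟨↑(s.filter fun i => logGap (w i) ≤ logGapWindow ε),
    fun i hi => (hmem i).1 (mem_filter.1 hi).1, ?_, fun i hi => ?_⟩
  · rw [finsum_mem_coe_finset]
    linarith
  · obtain ⟨his, hle⟩ := mem_filter.1 hi
    have hroot : 0 < h i ^ (1 / p) := Real.rpow_pos_of_pos (hh i his) _
    obtain ⟨hlo, hhi⟩ := mem_Icc_of_logGap_le_logGapWindow hε0.le (hw i his) hle
    exact ⟨(le_div_iff₀ hroot).1 hlo, (div_le_iff₀ hroot).1 hhi⟩
end
end

section
/- Let 1 < p < ∞ and let h₁, h₂ ∈ ℓ_1 be finitely supported with h₁_i ≥ 0, h₂_i ≥ 0 for all i, Σ h₁_i = Σ h₂_i = 1 and ‖h₁ − h₂‖_1 ≤ 1. Set x₁ = (h₁_i^{1/p})_{i∈ℕ} and x₂ = (h₂_i^{1/p})_{i∈ℕ}, so that x₁, x₂ ∈ S(ℓ_p). Then ‖(x₁ + x₂)/2‖_p ≥ 1 − ‖h₁ − h₂‖_1^{1/2}. -/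
/-!
The `p`-th power of the norm of the midpoint is `∑ ((h₁ i ^ (1/p) + h₂ i ^ (1/p)) / 2) ^ p`,
and each summand dominates `min (h₁ i) (h₂ i)`. Since `min a b = (a + b - |a - b|) / 2`, the
minima sum to `1 - δ / 2` with `δ = ‖h₁ - h₂‖₁`, so `‖(x₁ + x₂) / 2‖ ≥ (1 - δ / 2) ^ (1/p)`,
which is at least `1 - δ / 2 ≥ 1 - √δ` as long as `δ < 1`; for `δ ≥ 1` the right-hand side is nonpositive.
-/

namespace Real

lemma min_le_rpow_midpoint_rpow_inv {a b p : ℝ} (ha : 0 ≤ a) (hb : 0 ≤ b) (hp : 0 < p) :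
    min a b ≤ ((a ^ p⁻¹ + b ^ p⁻¹) / 2) ^ p := by
  have hmin : 0 ≤ min a b := le_min ha hb
  rw [← rpow_inv_le_iff_of_pos hmin (by positivity) hp]
  have hle₁ : min a b ^ p⁻¹ ≤ a ^ p⁻¹ := rpow_le_rpow hmin (min_le_left a b) (by positivity)
  have hle₂ : min a b ^ p⁻¹ ≤ b ^ p⁻¹ := rpow_le_rpow hmin (min_le_right a b) (by positivity)
  linarith

lemma one_sub_sqrt_le_of_one_sub_half_le_rpow {p δ r : ℝ} (hp : 1 ≤ p) (hr : 0 ≤ r)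
    (h : 1 - δ / 2 ≤ r ^ p) : 1 - √δ ≤ r := by
  rcases le_or_gt 1 r with hr₁ | hr₁
  · linarith [sqrt_nonneg δ]
  rcases le_or_gt 1 δ with hδ₁ | hδ₁
  · linarith [one_le_sqrt.mpr hδ₁]
  linarith [le_sqrt_self_iff.mpr hδ₁.le, sqrt_nonneg δ, rpow_le_self_of_le_one hr hr₁.le hp]

end Real

lemma HasSum.min_of_abs_sub {ι : Type*} {f g : ι → ℝ} {a b d : ℝ} (hf : HasSum f a)
    (hg : HasSum g b) (hd : HasSum (fun i => |f i - g i|) d) :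
    HasSum (fun i => min (f i) (g i)) ((a + b - d) / 2) := by
  have hmin : ∀ i, min (f i) (g i) = (f i + g i - |f i - g i|) / 2 := fun i => by
    rcases le_total (f i) (g i) with h | h
    · rw [min_eq_left h, abs_of_nonpos (sub_nonpos.mpr h)]; ring
    · rw [min_eq_right h, abs_of_nonneg (sub_nonneg.mpr h)]; ring
  simpa only [hmin] using ((hf.add hg).sub hd).div_const 2

lemma hasSum_finsum_of_hasFiniteSupport {ι α : Type*} [AddCommMonoid α] [TopologicalSpace α]
    {f : ι → α} (hf : f.HasFiniteSupport) :
    HasSum f (∑ᶠ i, f i) :=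
  tsum_eq_finsum (L := SummationFilter.unconditional ι) hf ▸
    (summable_of_hasFiniteSupport hf).hasSum

namespace lp

variable {ι : Type*} {p : ℝ} [Fact (1 ≤ ENNReal.ofReal p)]

variable (p) in
lemma exponent_pos : 0 < p :=
  zero_lt_one.trans_le (ENNReal.one_le_ofReal.mp Fact.out)

lemma hasSum_abs_rpow (x : lp (fun _ : ι => ℝ) (ENNReal.ofReal p)) :
    HasSum (fun i => |x i| ^ p) (‖x‖ ^ p) := by
  have hp : (ENNReal.ofReal p).toReal = p := ENNReal.toReal_ofReal (exponent_pos p).le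
  simpa only [hp, Real.norm_eq_abs] using lp.hasSum_norm (hp.symm ▸ exponent_pos p) x

lemma hasSum_norm_rpow_of_eq_rpow_inv {h : ι → ℝ} (hpos : ∀ i, 0 ≤ h i)
    {x : lp (fun _ : ι => ℝ) (ENNReal.ofReal p)} (hx : ∀ i, x i = h i ^ p⁻¹) :
    HasSum h (‖x‖ ^ p) := by
  convert hasSum_abs_rpow x with i
  rw [hx, abs_of_nonneg (Real.rpow_nonneg (hpos i) _),
    Real.rpow_inv_rpow (hpos i) (exponent_pos p).ne']

lemma norm_eq_one_of_eq_rpow_inv {h : ι → ℝ} (hpos : ∀ i, 0 ≤ h i) (hsum : HasSum h 1)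
    {x : lp (fun _ : ι => ℝ) (ENNReal.ofReal p)} (hx : ∀ i, x i = h i ^ p⁻¹) : ‖x‖ = 1 := by
  have hp : p ≠ 0 := (exponent_pos p).ne'
  rw [← Real.rpow_left_inj (norm_nonneg x) zero_le_one hp, Real.one_rpow]
  exact (hasSum_norm_rpow_of_eq_rpow_inv hpos hx).unique hsum

lemma add_sub_div_two_le_norm_midpoint_rpow {h₁ h₂ : ι → ℝ} {a b d : ℝ}
    (hpos₁ : ∀ i, 0 ≤ h₁ i) (hpos₂ : ∀ i, 0 ≤ h₂ i) (hsum₁ : HasSum h₁ a) (hsum₂ : HasSum h₂ b)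
    (hd : HasSum (fun i => |h₁ i - h₂ i|) d) {x₁ x₂ : lp (fun _ : ι => ℝ) (ENNReal.ofReal p)}
    (hx₁ : ∀ i, x₁ i = h₁ i ^ p⁻¹) (hx₂ : ∀ i, x₂ i = h₂ i ^ p⁻¹) :
    (a + b - d) / 2 ≤ ‖(1 / 2 : ℝ) • (x₁ + x₂)‖ ^ p := by
  refine hasSum_le (fun i => ?_) (hsum₁.min_of_abs_sub hsum₂ hd) (hasSum_abs_rpow _)
  have hmid : ((1 / 2 : ℝ) • (x₁ + x₂)) i = (h₁ i ^ p⁻¹ + h₂ i ^ p⁻¹) / 2 := by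
    simp only [lp.coeFn_smul, lp.coeFn_add, Pi.smul_apply, Pi.add_apply, hx₁, hx₂, smul_eq_mul]
    ring
  rw [hmid, abs_of_nonneg (div_nonneg (add_nonneg (Real.rpow_nonneg (hpos₁ i) _)
    (Real.rpow_nonneg (hpos₂ i) _)) zero_le_two)]
  exact Real.min_le_rpow_midpoint_rpow_inv (hpos₁ i) (hpos₂ i) (exponent_pos p)

end lp

theorem midpoint_estimate_for_entropy_maximizers_general (p : ℝ) (hp : 1 < p)
    [Fact (1 ≤ ENNReal.ofReal p)]
    (h₁ h₂ : ℕ → ℝ)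
    (hfin₁ : {i : ℕ | h₁ i ≠ 0}.Finite) (hfin₂ : {i : ℕ | h₂ i ≠ 0}.Finite)
    (hpos₁ : ∀ i, 0 ≤ h₁ i) (hpos₂ : ∀ i, 0 ≤ h₂ i)
    (hsum₁ : ∑ᶠ i, h₁ i = 1) (hsum₂ : ∑ᶠ i, h₂ i = 1)
    (x₁ x₂ : lp (fun _ : ℕ => ℝ) (ENNReal.ofReal p))
    (hx₁ : ∀ i, x₁ i = h₁ i ^ (1 / p)) (hx₂ : ∀ i, x₂ i = h₂ i ^ (1 / p)) :
    ‖x₁‖ = 1 ∧ ‖x₂‖ = 1 ∧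
      1 - Real.sqrt (∑ᶠ i, |h₁ i - h₂ i|) ≤ ‖(1 / 2 : ℝ) • (x₁ + x₂)‖ := by
  simp only [one_div p] at hx₁ hx₂
  have hs₁ : HasSum h₁ 1 := hsum₁ ▸ hasSum_finsum_of_hasFiniteSupport hfin₁
  have hs₂ : HasSum h₂ 1 := hsum₂ ▸ hasSum_finsum_of_hasFiniteSupport hfin₂
  have hd := hasSum_finsum_of_hasFiniteSupport (f := fun i => |h₁ i - h₂ i|)
    ((Function.HasFiniteSupport.fun_sub hfin₁ hfin₂).fun_comp abs_zero)
  refine ⟨lp.norm_eq_one_of_eq_rpow_inv hpos₁ hs₁ hx₁, lp.norm_eq_one_of_eq_rpow_inv hpos₂ hs₂ hx₂,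
    Real.one_sub_sqrt_le_of_one_sub_half_le_rpow hp.le (norm_nonneg _) ?_⟩
  have hmid := lp.add_sub_div_two_le_norm_midpoint_rpow hpos₁ hpos₂ hs₁ hs₂ hd hx₁ hx₂
  linarith

/-- If `h₁, h₂` are finitely supported nonnegative sequences with `∑ h₁ = ∑ h₂ = 1` and
`‖h₁ - h₂‖₁ ≤ 1`, and `x₁ = (h₁_i^{1/p})`, `x₂ = (h₂_i^{1/p})` in `ℓ_p`, then `x₁, x₂` are
unit vectors and `‖(x₁ + x₂)/2‖_p ≥ 1 - ‖h₁ - h₂‖₁^{1/2}`. -/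
theorem midpoint_estimate_for_entropy_maximizers (p : ℝ) (hp : 1 < p)
    [Fact (1 ≤ ENNReal.ofReal p)]
    (h₁ h₂ : ℕ → ℝ)
    (hfin₁ : {i : ℕ | h₁ i ≠ 0}.Finite) (hfin₂ : {i : ℕ | h₂ i ≠ 0}.Finite)
    (hpos₁ : ∀ i, 0 ≤ h₁ i) (hpos₂ : ∀ i, 0 ≤ h₂ i)
    (hsum₁ : ∑ᶠ i, h₁ i = 1) (hsum₂ : ∑ᶠ i, h₂ i = 1)
    (hdist : (∑ᶠ i, |h₁ i - h₂ i|) ≤ 1)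
    (x₁ x₂ : lp (fun _ : ℕ => ℝ) (ENNReal.ofReal p))
    (hx₁ : ∀ i, x₁ i = h₁ i ^ (1 / p)) (hx₂ : ∀ i, x₂ i = h₂ i ^ (1 / p)) :
    ‖x₁‖ = 1 ∧ ‖x₂‖ = 1 ∧
      1 - Real.sqrt (∑ᶠ i, |h₁ i - h₂ i|) ≤ ‖(1 / 2 : ℝ) • (x₁ + x₂)‖ :=
  midpoint_estimate_for_entropy_maximizers_general p hp h₁ h₂ hfin₁ hfin₂ hpos₁ hpos₂ hsum₁ hsum₂ x₁
    x₂ hx₁ hx₂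
end

section
/- Let X and Y be real normed spaces and let F : S(X) → S(Y) be a uniform homeomorphism. Define F̄ : Ba(X) → Ba(Y) by F̄(x) = ‖x‖·F(x/‖x‖) for x ≠ 0 and F̄(0) = 0. Then F̄ is a uniform homeomorphism between the closed unit balls Ba(X) and Ba(Y). -/
/-!
Polar coordinates `x = ‖x‖ • u` reduce everything to the sphere. If `Φ` and `Ψ` are the
homogeneous extensions of `F` and `G = F⁻¹`, then `Ψ (Φ (t • u)) = t • G (F u) = t • u`, so
they are mutually inverse. For uniform continuity write
`Φ a - Φ b = ‖a‖ • (F u - F v) + (‖a‖ - ‖b‖) • F v`: the second term is at most `‖a - b‖`;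
the first is small either because `‖a‖` is small, or because `‖a‖ ‖u - v‖ ≤ 2 ‖a - b‖`
makes `u` and `v` close when `‖a‖` is bounded below.
-/

open Metric

theorem dist_le_two_mul_of_mem_sphere {α : Type*} [PseudoMetricSpace α] {c x y : α} {r : ℝ}
    (hx : x ∈ sphere c r) (hy : y ∈ sphere c r) : dist x y ≤ 2 * r := by
  rw [mem_sphere] at hx hy
  linarith [dist_triangle_right x y c]

section NormedSpace

variable {E : Type*} [NormedAddCommGroup E] [NormedSpace ℝ E]

theorem norm_smul_sub_smul_le (t s : ℝ) (x y : E) :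
    ‖t • x - s • y‖ ≤ |t| * ‖x - y‖ + |t - s| * ‖y‖ := by
  have h : t • x - s • y = t • (x - y) + (t - s) • y := by module
  rw [h]
  refine (norm_add_le _ _).trans_eq ?_
  rw [norm_smul, norm_smul, Real.norm_eq_abs, Real.norm_eq_abs]

theorem norm_mul_norm_sub_le_of_eq_norm_smul {a b u v : E} (ha : a = ‖a‖ • u)
    (hb : b = ‖b‖ • v) (hv : ‖v‖ ≤ 1) : ‖a‖ * ‖u - v‖ ≤ 2 * ‖a - b‖ := by
  have h : ‖a‖ • (u - v) = (a - b) + (‖b‖ - ‖a‖) • v := by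
    linear_combination (norm := module) hb - ha
  have hab : |‖b‖ - ‖a‖| ≤ ‖a - b‖ := by
    rw [norm_sub_rev]
    exact abs_norm_sub_norm_le b a
  calc ‖a‖ * ‖u - v‖ = ‖(a - b) + (‖b‖ - ‖a‖) • v‖ := by
        rw [← h, norm_smul, norm_norm]
    _ ≤ ‖a - b‖ + |‖b‖ - ‖a‖| * ‖v‖ := by
        refine (norm_add_le _ _).trans_eq ?_
        rw [norm_smul, Real.norm_eq_abs]
    _ ≤ ‖a - b‖ + ‖a - b‖ * 1 := by gcongr
    _ = 2 * ‖a - b‖ := by ring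

theorem exists_mem_sphere_eq_norm_smul [Nontrivial E] (x : E) :
    ∃ u : sphere (0 : E) 1, x = ‖x‖ • (u : E) := by
  rcases eq_or_ne x 0 with rfl | hx
  · obtain ⟨u, hu⟩ := NormedSpace.sphere_nonempty (x := (0 : E)).mpr zero_le_one
    exact ⟨⟨u, hu⟩, by simp⟩
  · refine ⟨⟨‖x‖⁻¹ • x, by simpa using norm_smul_inv_norm (𝕜 := ℝ) hx⟩, ?_⟩
    rw [smul_inv_smul₀ (norm_ne_zero_iff.mpr hx)]

end NormedSpace

section HomogeneousExtension

variable {X Y : Type*} [NormedAddCommGroup X] [NormedSpace ℝ X]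
  [NormedAddCommGroup Y] [NormedSpace ℝ Y]

def IsHomogeneousExtension (F : sphere (0 : X) 1 → sphere (0 : Y) 1)
    (Φ : closedBall (0 : X) 1 → closedBall (0 : Y) 1) : Prop :=
  ∀ (x : closedBall (0 : X) 1) (u : sphere (0 : X) 1) (t : ℝ),
    0 ≤ t → (x : X) = t • (u : X) → (Φ x : Y) = t • (F u : Y)

open Classical in
noncomputable def homogeneousExtension (F : sphere (0 : X) 1 → sphere (0 : Y) 1) (x : X) : Y :=
  if hx : x = 0 then 0
  else ‖x‖ • (F ⟨‖x‖⁻¹ • x, by simpa using norm_smul_inv_norm (𝕜 := ℝ) hx⟩ : Y)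

theorem norm_homogeneousExtension (F : sphere (0 : X) 1 → sphere (0 : Y) 1) (x : X) :
    ‖homogeneousExtension F x‖ = ‖x‖ := by
  unfold homogeneousExtension
  split_ifs with hx
  · simp [hx]
  · rw [norm_smul, norm_norm, norm_eq_of_mem_sphere, mul_one]

theorem homogeneousExtension_smul (F : sphere (0 : X) 1 → sphere (0 : Y) 1) {t : ℝ}
    (ht : 0 ≤ t) (u : sphere (0 : X) 1) :
    homogeneousExtension F (t • (u : X)) = t • (F u : Y) := by
  rcases ht.eq_or_lt with rfl | ht
  · simp [homogeneousExtension]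
  have hu : (u : X) ≠ 0 := ne_zero_of_mem_unit_sphere u
  have hnorm : ‖t • (u : X)‖ = t := by
    rw [norm_smul, norm_eq_of_mem_sphere, mul_one, Real.norm_of_nonneg ht.le]
  rw [homogeneousExtension, dif_neg (smul_ne_zero ht.ne' hu)]
  simp only [hnorm, inv_smul_smul₀ ht.ne']

noncomputable def homogeneousExtensionBall (F : sphere (0 : X) 1 → sphere (0 : Y) 1)
    (x : closedBall (0 : X) 1) : closedBall (0 : Y) 1 :=
  ⟨homogeneousExtension F x, mem_closedBall_zero_iff.mpr <|
    (norm_homogeneousExtension F x).trans_le (mem_closedBall_zero_iff.mp x.2)⟩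

theorem isHomogeneousExtension_homogeneousExtensionBall
    (F : sphere (0 : X) 1 → sphere (0 : Y) 1) :
    IsHomogeneousExtension F (homogeneousExtensionBall F) := by
  intro x u t ht hx
  simp only [homogeneousExtensionBall, hx, homogeneousExtension_smul F ht u]

namespace IsHomogeneousExtension

variable {F : sphere (0 : X) 1 → sphere (0 : Y) 1} {G : sphere (0 : Y) 1 → sphere (0 : X) 1}
  {Φ : closedBall (0 : X) 1 → closedBall (0 : Y) 1} {Ψ : closedBall (0 : Y) 1 → closedBall (0 : X) 1}

theorem leftInverse (hΦ : IsHomogeneousExtension F Φ) (hΨ : IsHomogeneousExtension G Ψ)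
    (hGF : Function.LeftInverse G F) : Function.LeftInverse Ψ Φ := by
  intro x
  rcases subsingleton_or_nontrivial X with hX | hX
  · exact Subsingleton.elim _ _
  obtain ⟨u, hu⟩ := exists_mem_sphere_eq_norm_smul (x : X)
  have hΦx := hΦ x u _ (norm_nonneg _) hu
  apply Subtype.ext
  rw [hΨ (Φ x) (F u) _ (norm_nonneg _) hΦx, hGF u, ← hu]

theorem uniformContinuous (hΦ : IsHomogeneousExtension F Φ) (hF : UniformContinuous F) :
    UniformContinuous Φ := by
  rcases subsingleton_or_nontrivial X with hX | hX
  · exact uniformContinuous_of_const fun a b => congrArg Φ (Subsingleton.elim a b)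
  rw [Metric.uniformContinuous_iff]
  intro ε hε
  obtain ⟨δ, hδ, hFδ⟩ := Metric.uniformContinuous_iff.mp hF (ε / 2) (half_pos hε)
  refine ⟨min (ε / 2) (ε * δ / 8), by positivity, fun {a b} hab => ?_⟩
  rw [Subtype.dist_eq, dist_eq_norm, lt_min_iff] at hab
  obtain ⟨u, hu⟩ := exists_mem_sphere_eq_norm_smul (a : X)
  obtain ⟨v, hv⟩ := exists_mem_sphere_eq_norm_smul (b : X)
  have ha1 : ‖(a : X)‖ ≤ 1 := mem_closedBall_zero_iff.mp a.2
  have hFuv : ‖(a : X)‖ * ‖(F u : Y) - F v‖ ≤ ε / 2 := by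
    rcases le_or_gt ‖(a : X)‖ (ε / 4) with hsmall | hlarge
    · have h2 : ‖(F u : Y) - F v‖ ≤ 2 := by
        simpa [← dist_eq_norm] using dist_le_two_mul_of_mem_sphere (F u).2 (F v).2
      nlinarith [norm_nonneg (a : X)]
    · -- `u` and `v` are `δ`-close, since `‖a‖ * ‖u - v‖ ≤ 2 ‖a - b‖ < ε δ / 4 < ‖a‖ δ`.
      have huv := norm_mul_norm_sub_le_of_eq_norm_smul hu hv (norm_eq_of_mem_sphere v).le
      have hduv : dist u v < δ := by
        rw [Subtype.dist_eq, dist_eq_norm]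
        by_contra! h
        nlinarith
      have := hFδ hduv
      rw [Subtype.dist_eq, dist_eq_norm] at this
      nlinarith [norm_nonneg ((F u : Y) - F v)]
  have hnorms : |‖(a : X)‖ - ‖(b : X)‖| ≤ ‖(a : X) - b‖ := abs_norm_sub_norm_le _ _
  rw [Subtype.dist_eq, dist_eq_norm, hΦ a u _ (norm_nonneg _) hu, hΦ b v _ (norm_nonneg _) hv]
  calc ‖‖(a : X)‖ • (F u : Y) - ‖(b : X)‖ • (F v : Y)‖
      ≤ |‖(a : X)‖| * ‖(F u : Y) - F v‖ + |‖(a : X)‖ - ‖(b : X)‖| * ‖(F v : Y)‖ :=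
        norm_smul_sub_smul_le _ _ _ _
    _ < ε / 2 + ε / 2 := by
        rw [abs_norm, norm_eq_of_mem_sphere, mul_one]
        linarith
    _ = ε := add_halves ε

end IsHomogeneousExtension

end HomogeneousExtension

/-- If `F : S(X) → S(Y)` is a uniform homeomorphism, then its positively homogeneous
extension `F̄(x) = ‖x‖·F(x/‖x‖)`, `F̄(0) = 0`, is a uniform homeomorphism between the
closed unit balls of `X` and `Y`. -/
theorem uniform_homeomorphism_extends_to_balls
    (X Y : Type*) [NormedAddCommGroup X] [NormedSpace ℝ X]
    [NormedAddCommGroup Y] [NormedSpace ℝ Y]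
    (F : Metric.sphere (0 : X) 1 → Metric.sphere (0 : Y) 1)
    (G : Metric.sphere (0 : Y) 1 → Metric.sphere (0 : X) 1)
    (hGF : Function.LeftInverse G F) (hFG : Function.RightInverse G F)
    (hF : UniformContinuous F) (hG : UniformContinuous G)
    (Fbar : Metric.closedBall (0 : X) 1 → Metric.closedBall (0 : Y) 1)
    (hFbar : ∀ (xb : Metric.closedBall (0 : X) 1) (u : Metric.sphere (0 : X) 1) (t : ℝ),
      0 ≤ t → (xb : X) = t • (u : X) → (Fbar xb : Y) = t • (F u : Y)) :
    Function.Bijective Fbar ∧ UniformContinuous Fbar ∧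
      ∃ Gbar : Metric.closedBall (0 : Y) 1 → Metric.closedBall (0 : X) 1,
        Function.LeftInverse Gbar Fbar ∧ Function.RightInverse Gbar Fbar ∧
        UniformContinuous Gbar := by
  have hFbar' : IsHomogeneousExtension F Fbar := hFbar
  have hGbar := isHomogeneousExtension_homogeneousExtensionBall G
  have hL := hFbar'.leftInverse hGbar hGF
  have hR := hGbar.leftInverse hFbar' hFG
  exact ⟨⟨hL.injective, hR.surjective⟩, hFbar'.uniformContinuous hF, _, hL, hR,
    hGbar.uniformContinuous hG⟩
end

section
/- Let X be an infinite-dimensional uniformly convex real Banach space and suppose C, D ⊆ S(X) are asymptotic sets with d(C, D) = inf{‖c − d‖ : c ∈ C, d ∈ D} > 0. Then X contains a distortable subspace: there exist a closed infinite-dimensional linear subspace W of X, a constant λ > 1 and an equivalent norm N on W such that for every closed infinite-dimensional linear subspace Y of W, sup{N(y)/N(z) : y, z ∈ Y, ‖y‖ = ‖z‖ = 1} > λ. -/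
/-!
If no subspace is distortable, the norms whose unit balls are the convex hulls of
`C ∪ -C ∪ ½B` and of `D ∪ -D ∪ ½B` are almost constant on the unit sphere of some closed
infinite-dimensional subspace `Z`. Asymptoticity puts a unit vector of `Z` close to `C`, where the
first norm is about `1`; hence it is about `1` on all of `S(Z)`, and uniform convexity then puts
every point of `S(Z)` close to `C ∪ -C`; likewise close to `D ∪ -D`. As `C` and `D` are separated,
`S(Z)` is covered by the disjoint open sets "near `C` and `-D`" and "near `-C` and `D`", both met by
`S(Z)` (asymptoticity again), which contradicts the connectedness of `S(Z)`.
-/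

noncomputable section

/-- A subset `C` of the unit sphere of `X` is asymptotic if every closed
infinite-dimensional subspace contains unit vectors arbitrarily close to `C`. -/
def IsAsymptotic {X : Type*} [NormedAddCommGroup X] [NormedSpace ℝ X] (C : Set X) : Prop :=
  ∀ Z : Submodule ℝ X, IsClosed (Z : Set X) → ¬ FiniteDimensional ℝ Z →
    ∀ δ : ℝ, 0 < δ → ∃ z ∈ Z, ‖z‖ = 1 ∧ ∃ c ∈ C, ‖z - c‖ < δ

/-- `N` is an equivalent norm on the normed space `X`. -/
def IsEquivNorm {X : Type*} [NormedAddCommGroup X] [NormedSpace ℝ X] (N : X → ℝ) : Prop :=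
  (∀ x y : X, N (x + y) ≤ N x + N y) ∧
  (∀ (a : ℝ) (x : X), N (a • x) = |a| * N x) ∧
  ∃ c C : ℝ, 0 < c ∧ c ≤ C ∧ ∀ x : X, c * ‖x‖ ≤ N x ∧ N x ≤ C * ‖x‖

open Metric Set

section Thickening

variable {E : Type*} [PseudoMetricSpace E]

lemma disjoint_thickening_half_of_le_dist {C D : Set E} {r : ℝ}
    (hsep : ∀ c ∈ C, ∀ d ∈ D, r ≤ dist c d) :
    Disjoint (thickening (r / 2) C) (thickening (r / 2) D) := by
  refine Set.disjoint_left.2 fun x hxC hxD => ?_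
  obtain ⟨c, hc, hxc⟩ := mem_thickening_iff.1 hxC
  obtain ⟨d, hd, hxd⟩ := mem_thickening_iff.1 hxD
  linarith [hsep c hc d hd, dist_triangle_left c d x]

end Thickening

section Connected

variable {E : Type*} [SeminormedAddCommGroup E]

/-- Points of `T` near `C` are near `-D`, points near `D` are near `-C`, and these two open
conditions exclude each other; so if `T` is preconnected only one of them occurs on `T`. -/
lemma IsPreconnected.disjoint_thickening_of_subset_thickening {T C D : Set E}
    (hT : IsPreconnected T) {r : ℝ} (hsep : ∀ c ∈ C, ∀ d ∈ D, r ≤ ‖c - d‖)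
    (hTC : T ⊆ thickening (r / 2) (C ∪ -C)) (hTD : T ⊆ thickening (r / 2) (D ∪ -D))
    (hu : (T ∩ thickening (r / 2) C).Nonempty) : Disjoint T (thickening (r / 2) D) := by
  have hCD := disjoint_thickening_half_of_le_dist fun c hc d hd =>
    (hsep c hc d hd).trans_eq (dist_eq_norm c d).symm
  have hCD' := disjoint_thickening_half_of_le_dist (C := -C) (D := -D) fun c hc d hd => by
    have h := hsep (-c) hc (-d) hd
    rwa [neg_sub_neg, norm_sub_rev, ← dist_eq_norm] at h
  have hTC' : ∀ x ∈ T, x ∈ thickening (r / 2) C ∨ x ∈ thickening (r / 2) (-C) := fun x hx => by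
    simpa only [thickening_union, mem_union] using hTC hx
  have hTD' : ∀ x ∈ T, x ∈ thickening (r / 2) D ∨ x ∈ thickening (r / 2) (-D) := fun x hx => by
    simpa only [thickening_union, mem_union] using hTD hx
  set U := thickening (r / 2) C ∩ thickening (r / 2) (-D)
  set V := thickening (r / 2) (-C) ∩ thickening (r / 2) D
  have hcover : T ⊆ U ∪ V := by
    intro x hx
    rcases hTC' x hx with h₁ | h₁ <;> rcases hTD' x hx with h₂ | h₂
    · exact (Set.disjoint_left.1 hCD h₁ h₂).elim
    · exact Or.inl ⟨h₁, h₂⟩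
    · exact Or.inr ⟨h₁, h₂⟩
    · exact (Set.disjoint_left.1 hCD' h₁ h₂).elim
  refine Set.disjoint_right.2 fun v hvD hvT => ?_
  obtain ⟨u, huT, huC⟩ := hu
  have huU : u ∈ U := ⟨huC, (hTD' u huT).resolve_left (Set.disjoint_left.1 hCD huC)⟩
  have hvV : v ∈ V := ⟨(hTC' v hvT).resolve_left fun h => Set.disjoint_left.1 hCD h hvD, hvD⟩
  obtain ⟨x, -, hxU, hxV⟩ := hT U V (isOpen_thickening.inter isOpen_thickening)
    (isOpen_thickening.inter isOpen_thickening) hcover ⟨u, huT, huU⟩ ⟨v, hvT, hvV⟩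
  exact Set.disjoint_left.1 hCD hxU.1 hxV.2

lemma Submodule.isConnected_inter_sphere {E : Type*} [NormedAddCommGroup E] [NormedSpace ℝ E]
    {Z : Submodule ℝ E} (hZ : 1 < Module.rank ℝ Z) :
    IsConnected ((Z : Set E) ∩ sphere 0 1) := by
  have himage : (Z : Set E) ∩ sphere 0 1 = Subtype.val '' sphere (0 : Z) 1 := by
    ext x
    simp [and_comm]
  rw [himage]
  exact (isConnected_sphere hZ 0 zero_le_one).image _ continuous_subtype_val.continuousOn

end Connected

section SymmHull

variable {E : Type*} [NormedAddCommGroup E] [NormedSpace ℝ E] {S : Set E}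

/-- The unit ball of an equivalent norm: the ball `closedBall 0 (1 / 2)` makes its gauge
equivalent to `‖·‖`, and `S ∪ -S` makes it symmetric. -/
def symmHull (S : Set E) : Set E :=
  convexHull ℝ (S ∪ -S ∪ closedBall 0 (1 / 2))

lemma closedBall_subset_symmHull (S : Set E) : closedBall (0 : E) (1 / 2) ⊆ symmHull S :=
  subset_union_right.trans (subset_convexHull ℝ _)

lemma symmHull_subset_closedBall (hS : S ⊆ closedBall 0 1) : symmHull S ⊆ closedBall 0 1 := by
  refine convexHull_min (union_subset (union_subset hS fun x hx => ?_)
    (closedBall_subset_closedBall (by norm_num))) (convex_closedBall 0 1)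
  simpa using hS hx

lemma neg_mem_symmHull {x : E} (hx : x ∈ symmHull S) : -x ∈ symmHull S := by
  have hsymm : -(S ∪ -S ∪ closedBall (0 : E) (1 / 2)) = S ∪ -S ∪ closedBall 0 (1 / 2) := by
    ext y
    simp [or_comm]
  rw [symmHull, ← hsymm, convexHull_neg]
  simpa [symmHull] using hx

lemma balanced_symmHull (S : Set E) : Balanced ℝ (symmHull S) :=
  (balanced_iff_neg_mem (convex_convexHull ℝ _)).2 fun _ => neg_mem_symmHull

lemma absorbent_symmHull (S : Set E) : Absorbent ℝ (symmHull S) :=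
  (absorbent_ball_zero (by norm_num)).mono
    (ball_subset_closedBall.trans (closedBall_subset_symmHull S))

lemma norm_le_gauge_symmHull (hS : S ⊆ closedBall 0 1) (x : E) : ‖x‖ ≤ gauge (symmHull S) x := by
  simpa [gauge_closedBall zero_le_one] using
    gauge_mono (absorbent_symmHull S) (symmHull_subset_closedBall hS) x

lemma gauge_symmHull_le (S : Set E) (x : E) : gauge (symmHull S) x ≤ 2 * ‖x‖ := by
  have h := gauge_mono ((absorbent_ball_zero (by norm_num)).mono ball_subset_closedBall)
    (closedBall_subset_symmHull S) x
  rw [gauge_closedBall (by norm_num)] at h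
  linarith

lemma isEquivNorm_gauge_symmHull (hS : S ⊆ closedBall 0 1) : IsEquivNorm (gauge (symmHull S)) :=
  ⟨gauge_add_le (convex_convexHull ℝ _) (absorbent_symmHull S),
    fun a x => by rw [gauge_smul (balanced_symmHull S), Real.norm_eq_abs],
    1, 2, one_pos, one_le_two,
    fun x => ⟨(one_mul ‖x‖).trans_le (norm_le_gauge_symmHull hS x), gauge_symmHull_le S x⟩⟩

lemma gauge_symmHull_le_one_add {c : E} (hc : c ∈ S) (u : E) :
    gauge (symmHull S) u ≤ 1 + 2 * ‖u - c‖ :=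
  calc gauge (symmHull S) u = gauge (symmHull S) (c + (u - c)) := by rw [add_sub_cancel]
    _ ≤ gauge (symmHull S) c + gauge (symmHull S) (u - c) :=
      gauge_add_le (convex_convexHull ℝ _) (absorbent_symmHull S) _ _
    _ ≤ 1 + 2 * ‖u - c‖ := add_le_add
      (gauge_le_one_of_mem (subset_convexHull ℝ _ (Or.inl (Or.inl hc)))) (gauge_symmHull_le S _)

end SymmHull

section UniformConvex

variable {E : Type*} [NormedAddCommGroup E] [NormedSpace ℝ E]

lemma exists_mem_norm_sub_le_of_gauge_lt {K : Set E} (hK : K ⊆ closedBall 0 1)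
    (habs : Absorbent ℝ K) {x : E} {t : ℝ} (hx : ‖x‖ = 1) (ht : gauge K x < t) :
    ∃ p ∈ K, ‖x - p‖ ≤ t - 1 := by
  obtain ⟨b, hb, hbt, k, hk, rfl⟩ := exists_lt_of_gauge_lt habs ht
  have hk1 : ‖k‖ ≤ 1 := mem_closedBall_zero_iff.1 (hK hk)
  rw [norm_smul, Real.norm_of_nonneg hb.le] at hx
  have hb1 : 1 ≤ b := by nlinarith [norm_nonneg k]
  refine ⟨k, hk, ?_⟩
  rw [show b • k - k = (b - 1) • k by rw [sub_smul, one_smul], norm_smul,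
    Real.norm_of_nonneg (by linarith)]
  nlinarith

variable [UniformConvexSpace E]

/-- By the maximum principle a norming functional of `x` is nearly `1` at some point of
`S ∪ closedBall 0 ρ`; that point cannot lie in the small ball, and uniform convexity forces it to be
close to `x`. -/
lemma exists_near_of_near_convexHull {ρ θ : ℝ} (hρ : ρ < 1) (hθ : 0 < θ) :
    ∃ η > 0, ∀ S ⊆ sphere (0 : E) 1, ∀ x p : E, ‖x‖ = 1 →
      p ∈ convexHull ℝ (S ∪ closedBall 0 ρ) → ‖x - p‖ ≤ η → ∃ z ∈ S, ‖x - z‖ < θ := by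
  obtain ⟨δ, hδ, huc⟩ := exists_forall_sphere_dist_add_le_two_sub E hθ
  set η := min (δ / 2) ((1 - ρ) / 2)
  have hηδ : η ≤ δ / 2 := min_le_left _ _
  have hηρ : η ≤ (1 - ρ) / 2 := min_le_right _ _
  refine ⟨η, lt_min (by linarith) (by linarith), fun S hS x p hx hp hxp => ?_⟩
  obtain ⟨f, hf, hfx⟩ := exists_dual_vector ℝ x (by simp [hx])
  replace hfx : f x = 1 := by simpa [hx] using hfx
  have hf_le : ∀ y, f y ≤ ‖y‖ := fun y =>
    (le_abs_self _).trans ((f.le_opNorm y).trans_eq (by rw [hf, one_mul]))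
  have hfp : 1 - η ≤ f p := by
    have h := hf_le (x - p)
    rw [map_sub, hfx] at h
    linarith
  obtain ⟨z, hz, hfz⟩ :=
    (f.toLinearMap.convexOn convex_univ).exists_ge_of_mem_convexHull (subset_univ _) hp
  change f p ≤ f z at hfz
  rcases hz with hzS | hzB
  · refine ⟨z, hzS, lt_of_not_ge fun hfar => ?_⟩
    have hsum := hf_le (x + z)
    rw [map_add, hfx] at hsum
    linarith [huc hx (mem_sphere_zero_iff_norm.1 (hS hzS)) hfar]
  · linarith [hf_le z, mem_closedBall_zero_iff.1 hzB]

lemma exists_mem_thickening_of_gauge_symmHull_lt {θ : ℝ} (hθ : 0 < θ) :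
    ∃ ε > 0, ∀ S ⊆ sphere (0 : E) 1, ∀ x : E, ‖x‖ = 1 →
      gauge (symmHull S) x < 1 + ε → x ∈ thickening θ (S ∪ -S) := by
  obtain ⟨ε, hε, hnear⟩ :=
    exists_near_of_near_convexHull (E := E) (by norm_num : (1 / 2 : ℝ) < 1) hθ
  refine ⟨ε, hε, fun S hS x hx hgx => ?_⟩
  have hSS : S ∪ -S ⊆ sphere 0 1 := union_subset hS fun y hy => by simpa using hS hy
  obtain ⟨p, hp, hxp⟩ := exists_mem_norm_sub_le_of_gauge_lt
    (symmHull_subset_closedBall (hS.trans sphere_subset_closedBall)) (absorbent_symmHull S) hx hgx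
  obtain ⟨z, hz, hxz⟩ := hnear _ hSS x p hx hp (by linarith)
  exact mem_thickening_iff.2 ⟨z, hz, by rwa [dist_eq_norm]⟩

end UniformConvex

section Stability

variable {E : Type*} [NormedAddCommGroup E] [NormedSpace ℝ E]

def IsStableOn (N : E → ℝ) (lam : ℝ) (Z : Submodule ℝ E) : Prop :=
  ∀ x ∈ Z, ∀ y ∈ Z, ‖x‖ = 1 → ‖y‖ = 1 → N x ≤ lam * N y

lemma IsStableOn.mono {N : E → ℝ} {lam : ℝ} {Z Z' : Submodule ℝ E} (h : IsStableOn N lam Z)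
    (hZ : Z' ≤ Z) : IsStableOn N lam Z' :=
  fun x hx y hy => h x (hZ hx) y (hZ hy)

lemma sphere_subset_thickening_of_isStableOn [UniformConvexSpace E] {θ : ℝ} (hθ : 0 < θ) :
    ∃ η > 0, ∀ S ⊆ sphere (0 : E) 1, ∀ Z : Submodule ℝ E,
      IsStableOn (gauge (symmHull S)) (1 + η) Z → (∃ u ∈ Z, ‖u‖ = 1 ∧ ∃ c ∈ S, ‖u - c‖ < η) →
        (Z : Set E) ∩ sphere 0 1 ⊆ thickening θ (S ∪ -S) := by
  obtain ⟨ε, hε, hthick⟩ := exists_mem_thickening_of_gauge_symmHull_lt (E := E) hθ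
  set η := min (ε / 6) 1
  have hηε : η ≤ ε / 6 := min_le_left _ _
  have hη1 : η ≤ 1 := min_le_right _ _
  have hη : 0 < η := lt_min (by linarith) one_pos
  refine ⟨η, hη, ?_⟩
  rintro S hS Z hstab ⟨u, huZ, hu, c, hc, huc⟩ x ⟨hxZ, hx⟩
  rw [SetLike.mem_coe] at hxZ
  rw [mem_sphere_zero_iff_norm] at hx
  refine hthick S hS x hx ?_
  calc gauge (symmHull S) x ≤ (1 + η) * gauge (symmHull S) u := hstab x hxZ u huZ hx hu
    _ ≤ (1 + η) * (1 + 2 * η) := by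
      gcongr
      linarith [gauge_symmHull_le_one_add hc u]
    _ < 1 + ε := by nlinarith

lemma IsEquivNorm.comp_subtype {N : E → ℝ} (hN : IsEquivNorm N) (W : Submodule ℝ E) :
    IsEquivNorm fun x : W => N x := by
  obtain ⟨hadd, hsmul, c, C, hc, hcC, hbound⟩ := hN
  exact ⟨fun x y => hadd x y, fun a x => hsmul a x, c, C, hc, hcC, fun x => hbound x⟩

variable (E) in
def HasDistortableSubspace : Prop :=
  ∃ W : Submodule ℝ E, IsClosed (W : Set E) ∧ ¬ FiniteDimensional ℝ W ∧
    ∃ lam : ℝ, 1 < lam ∧ ∃ N : W → ℝ, IsEquivNorm N ∧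
      ∀ Y : Submodule ℝ W, IsClosed (Y : Set W) → ¬ FiniteDimensional ℝ Y →
        ∃ y ∈ Y, ∃ z ∈ Y, ‖(y : W)‖ = 1 ∧ ‖(z : W)‖ = 1 ∧ lam * N z < N y

lemma exists_isStableOn_of_not_hasDistortableSubspace (h : ¬ HasDistortableSubspace E)
    {Z : Submodule ℝ E} (hZc : IsClosed (Z : Set E)) (hZ : ¬ FiniteDimensional ℝ Z)
    {lam : ℝ} (hlam : 1 < lam) {N : E → ℝ} (hN : IsEquivNorm N) :
    ∃ Z' ≤ Z, IsClosed (Z' : Set E) ∧ ¬ FiniteDimensional ℝ Z' ∧ IsStableOn N lam Z' := by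
  simp only [HasDistortableSubspace, not_exists, not_and, not_forall, not_lt] at h
  obtain ⟨Y, hYc, hY, hstab⟩ := h Z hZc hZ lam hlam _ (hN.comp_subtype Z)
  refine ⟨Y.map Z.subtype, Submodule.map_subtype_le _ _, ?_, fun hfin => ?_, ?_⟩
  · rw [Submodule.map_coe, Submodule.coe_subtype]
    exact hZc.isClosedMap_subtype_val _ hYc
  · exact hY (Module.Finite.equiv
      (Submodule.equivMapOfInjective _ Z.injective_subtype Y).symm)
  · rintro _ ⟨x, hx, rfl⟩ _ ⟨y, hy, rfl⟩ hx1 hy1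
    exact hstab x hx y hy hx1 hy1

end Stability

theorem separated_asymptotic_sets_give_distortable_subspace_general
    (X : Type*) [NormedAddCommGroup X] [NormedSpace ℝ X]
    [UniformConvexSpace X] (hX : ¬ FiniteDimensional ℝ X)
    (C D : Set X)
    (hC : C ⊆ Metric.sphere (0 : X) 1) (hD : D ⊆ Metric.sphere (0 : X) 1)
    (hCa : IsAsymptotic C) (hDa : IsAsymptotic D)
    (hsep : ∃ r : ℝ, 0 < r ∧ ∀ c ∈ C, ∀ d ∈ D, r ≤ ‖c - d‖) :
    ∃ W : Submodule ℝ X, IsClosed (W : Set X) ∧ ¬ FiniteDimensional ℝ W ∧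
      ∃ lam : ℝ, 1 < lam ∧ ∃ N : W → ℝ, IsEquivNorm N ∧
        ∀ Y : Submodule ℝ W, IsClosed (Y : Set W) → ¬ FiniteDimensional ℝ Y →
          ∃ y ∈ Y, ∃ z ∈ Y, ‖(y : W)‖ = 1 ∧ ‖(z : W)‖ = 1 ∧ lam * N z < N y := by
  by_contra hnd
  obtain ⟨r, hr, hsep⟩ := hsep
  obtain ⟨η, hη, hnear⟩ := sphere_subset_thickening_of_isStableOn (E := X) (half_pos hr)
  have hlam : (1 : ℝ) < 1 + η := by linarith
  obtain ⟨Z₁, -, hZ₁c, hZ₁, hstabC⟩ := exists_isStableOn_of_not_hasDistortableSubspace hnd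
    (Submodule.top_coe (R := ℝ) (M := X) ▸ isClosed_univ)
    (fun h => hX (Module.Finite.equiv Submodule.topEquiv)) hlam
    (isEquivNorm_gauge_symmHull (hC.trans sphere_subset_closedBall))
  obtain ⟨Z, hZZ₁, hZc, hZ, hstabD⟩ := exists_isStableOn_of_not_hasDistortableSubspace hnd
    hZ₁c hZ₁ hlam (isEquivNorm_gauge_symmHull (hD.trans sphere_subset_closedBall))
  obtain ⟨u, huZ, hu, c, hc, huc⟩ := hCa Z hZc hZ _ (lt_min hη (half_pos hr))
  obtain ⟨v, hvZ, hv, d, hd, hvd⟩ := hDa Z hZc hZ _ (lt_min hη (half_pos hr))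
  have hTC := hnear C hC Z (hstabC.mono hZZ₁) ⟨u, huZ, hu, c, hc, huc.trans_le (min_le_left _ _)⟩
  have hTD := hnear D hD Z hstabD ⟨v, hvZ, hv, d, hd, hvd.trans_le (min_le_left _ _)⟩
  have hrank : 1 < Module.rank ℝ Z :=
    Cardinal.one_lt_aleph0.trans_le (not_lt.1 (mt Module.rank_lt_aleph0_iff.1 hZ))
  have hdisj := (Submodule.isConnected_inter_sphere hrank).isPreconnected
    |>.disjoint_thickening_of_subset_thickening hsep hTC hTD
      ⟨u, ⟨huZ, by simpa using hu⟩, mem_thickening_iff.2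
        ⟨c, hc, by rw [dist_eq_norm]; exact huc.trans_le (min_le_right _ _)⟩⟩
  exact Set.disjoint_left.1 hdisj ⟨hvZ, by simpa using hv⟩
    (mem_thickening_iff.2 ⟨d, hd, by rw [dist_eq_norm]; exact hvd.trans_le (min_le_right _ _)⟩)

/-- If the unit sphere of an infinite-dimensional uniformly convex Banach space contains
two asymptotic sets at positive distance, then `X` contains a distortable subspace. -/
theorem separated_asymptotic_sets_give_distortable_subspace
    (X : Type*) [NormedAddCommGroup X] [NormedSpace ℝ X] [CompleteSpace X]
    [UniformConvexSpace X] (hX : ¬ FiniteDimensional ℝ X)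
    (C D : Set X)
    (hC : C ⊆ Metric.sphere (0 : X) 1) (hD : D ⊆ Metric.sphere (0 : X) 1)
    (hCa : IsAsymptotic C) (hDa : IsAsymptotic D)
    (hsep : ∃ r : ℝ, 0 < r ∧ ∀ c ∈ C, ∀ d ∈ D, r ≤ ‖c - d‖) :
    ∃ W : Submodule ℝ X, IsClosed (W : Set X) ∧ ¬ FiniteDimensional ℝ W ∧
      ∃ lam : ℝ, 1 < lam ∧ ∃ N : W → ℝ, IsEquivNorm N ∧
        ∀ Y : Submodule ℝ W, IsClosed (Y : Set W) → ¬ FiniteDimensional ℝ Y →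
          ∃ y ∈ Y, ∃ z ∈ Y, ‖(y : W)‖ = 1 ∧ ‖(z : W)‖ = 1 ∧ lam * N z < N y :=
  separated_asymptotic_sets_give_distortable_subspace_general X hX C D hC hD hCa hDa hsep
end
end
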